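/- arXiv:1810.10074 — 11 statements merged into one kernel-verified Lean document; each statement's English description precedes it below -/
import Mathlib

section
/- If p is a synchronous correlation from a finite set X to a finite set Y and q is a synchronous correlation from Y to a finite set Z, then the composition q ∘ p is a synchronous correlation from X to Z. -/
open Finset Matrix Kronecker
open scoped ComplexOrder

/-- A correlation from a finite set `X` to a finite set `Y`. -/
def IsCorrelation {X Y : Type*} [Fintype X] [Fintype Y]
    (p : Y → Y → X → X → ℝ) : Prop :=
  (∀ yA yB xA xB, 0 ≤ p yA yB xA xB) ∧
  ∀ xA xB, (∑ yA : Y, ∑ yB : Y, p yA yB xA xB) = 1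

/-- A correlation is synchronous if `p yA yB x x = 0` whenever `yA ≠ yB`. -/
def IsSynchronous {X Y : Type*} (p : Y → Y → X → X → ℝ) : Prop :=
  ∀ (x : X) (yA yB : Y), yA ≠ yB → p yA yB x x = 0

/-- Composition of correlations via Kolmogorov's law. -/
def Comp {X Y Z : Type*} [Fintype Y]
    (q : Z → Z → Y → Y → ℝ) (p : Y → Y → X → X → ℝ) :
    Z → Z → X → X → ℝ :=
  fun zA zB xA xB => ∑ yA : Y, ∑ yB : Y, q zA zB yA yB * p yA yB xA xB

/-- The identity correlation on `X`. -/
def IdCorr (X : Type*) [DecidableEq X] : X → X → X → X → ℝ :=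
  fun xA' xB' xA xB =>
    (if xA' = xA then (1 : ℝ) else 0) * (if xB' = xB then (1 : ℝ) else 0)

/-- The nonsignaling condition. -/
def IsNonsignaling {X Y : Type*} [Fintype Y] (p : Y → Y → X → X → ℝ) : Prop :=
  (∀ yA xA xB xB', (∑ yB : Y, p yA yB xA xB) = ∑ yB : Y, p yA yB xA xB') ∧
  (∀ yB xA xA' xB, (∑ yA : Y, p yA yB xA xB) = ∑ yA : Y, p yA yB xA' xB)

/-- A classical (hidden variables) correlation. -/
def IsClassical {X Y : Type*} [Fintype X] [Fintype Y] (p : Y → Y → X → X → ℝ) : Prop :=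
  ∃ (n : ℕ) (μ : Fin n → ℝ) (PrA PrB : Y → X → Fin n → ℝ),
    (∀ ω, 0 ≤ μ ω) ∧ ((∑ ω, μ ω) = 1) ∧
    (∀ y x ω, 0 ≤ PrA y x ω) ∧ (∀ x ω, (∑ y : Y, PrA y x ω) = 1) ∧
    (∀ y x ω, 0 ≤ PrB y x ω) ∧ (∀ x ω, (∑ y : Y, PrB y x ω) = 1) ∧
    ∀ yA yB xA xB, p yA yB xA xB = ∑ ω, μ ω * PrA yA xA ω * PrB yB xB ω

/-- A quantum correlation. -/
def IsQuantum {X Y : Type*} [Fintype X] [Fintype Y] (p : Y → Y → X → X → ℝ) : Prop :=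
  ∃ (dA dB : ℕ), 0 < dA ∧ 0 < dB ∧
    ∃ (ρ : Matrix (Fin dA × Fin dB) (Fin dA × Fin dB) ℂ)
      (E : X → Y → Matrix (Fin dA) (Fin dA) ℂ)
      (F : X → Y → Matrix (Fin dB) (Fin dB) ℂ),
      ρ.PosSemidef ∧ ρ.trace = 1 ∧
      (∀ x y, (E x y).PosSemidef) ∧ (∀ x, (∑ y : Y, E x y) = 1) ∧
      (∀ x y, (F x y).PosSemidef) ∧ (∀ x, (∑ y : Y, F x y) = 1) ∧
      ∀ yA yB xA xB, (ρ * (E xA yA ⊗ₖ F xB yB)).trace = (p yA yB xA xB : ℂ)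

/-- A symmetric correlation. -/
def IsSymmetric {X Y : Type*} (p : Y → Y → X → X → ℝ) : Prop :=
  ∀ yA yB xA xB, p yA yB xA xB = p yB yA xB xA

private lemma sum_swap4' {α β M : Type*} [Fintype α] [Fintype β] [AddCommMonoid M]
    (f : α → α → β → β → M) :
    (∑ a, ∑ b, ∑ c, ∑ d, f a b c d) = ∑ c, ∑ d, ∑ a, ∑ b, f a b c d :=
  calc (∑ a, ∑ b, ∑ c, ∑ d, f a b c d)
      = ∑ a, ∑ c, ∑ b, ∑ d, f a b c d :=
        Finset.sum_congr rfl fun _ _ => Finset.sum_comm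
    _ = ∑ c, ∑ a, ∑ b, ∑ d, f a b c d := Finset.sum_comm
    _ = ∑ c, ∑ a, ∑ d, ∑ b, f a b c d :=
        Finset.sum_congr rfl fun _ _ => Finset.sum_congr rfl fun _ _ => Finset.sum_comm
    _ = ∑ c, ∑ d, ∑ a, ∑ b, f a b c d :=
        Finset.sum_congr rfl fun _ _ => Finset.sum_comm

/-- The composition of synchronous correlations is a synchronous correlation. -/
theorem composition_of_synchronous {X Y Z : Type*} [Fintype X] [Fintype Y] [Fintype Z]
    (p : Y → Y → X → X → ℝ) (q : Z → Z → Y → Y → ℝ)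
    (hp : IsCorrelation p) (hps : IsSynchronous p)
    (hq : IsCorrelation q) (hqs : IsSynchronous q) :
    IsCorrelation (Comp q p) ∧ IsSynchronous (Comp q p) := by
  obtain ⟨hp0, hp1⟩ := hp
  obtain ⟨hq0, hq1⟩ := hq
  refine ⟨⟨fun zA zB xA xB => ?_, fun xA xB => ?_⟩, fun x zA zB hne => ?_⟩
  · unfold Comp
    exact Finset.sum_nonneg fun yA _ => Finset.sum_nonneg fun yB _ =>
      mul_nonneg (hq0 _ _ _ _) (hp0 _ _ _ _)
  · calc (∑ zA : Z, ∑ zB : Z, Comp q p zA zB xA xB)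
        = ∑ yA : Y, ∑ yB : Y, (∑ zA : Z, ∑ zB : Z, q zA zB yA yB) * p yA yB xA xB := by
          unfold Comp
          rw [sum_swap4' (fun zA zB yA yB => q zA zB yA yB * p yA yB xA xB)]
          simp only [Finset.sum_mul]
      _ = ∑ yA : Y, ∑ yB : Y, p yA yB xA xB := by
          refine Finset.sum_congr rfl fun yA _ => Finset.sum_congr rfl fun yB _ => ?_
          rw [hq1, one_mul]
      _ = 1 := hp1 xA xB
  · unfold Comp
    refine Finset.sum_eq_zero fun yA _ => Finset.sum_eq_zero fun yB _ => ?_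
    by_cases h : yA = yB
    · subst h
      rw [hqs yA zA zB hne, zero_mul]
    · rw [hps x yA yB h, mul_zero]
end

section
/- If p is a classical correlation from a finite set X to a finite set Y and q is a classical correlation from Y to a finite set Z, then the composition q ∘ p is a classical correlation from X to Z. -/
open Finset Matrix Kronecker
open scoped ComplexOrder

theorem sum_comm4 {α β γ δ M : Type*} [Fintype α] [Fintype β] [Fintype γ] [Fintype δ]
    [AddCommMonoid M] (f : α → β → γ → δ → M) :
    (∑ a, ∑ b, ∑ c, ∑ d, f a b c d) = ∑ c, ∑ d, ∑ a, ∑ b, f a b c d :=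
  calc (∑ a, ∑ b, ∑ c, ∑ d, f a b c d)
      = ∑ a, ∑ c, ∑ b, ∑ d, f a b c d :=
        Finset.sum_congr rfl fun _ _ => Finset.sum_comm
    _ = ∑ c, ∑ a, ∑ b, ∑ d, f a b c d := Finset.sum_comm
    _ = ∑ c, ∑ a, ∑ d, ∑ b, f a b c d :=
        Finset.sum_congr rfl fun _ _ => Finset.sum_congr rfl fun _ _ => Finset.sum_comm
    _ = ∑ c, ∑ d, ∑ a, ∑ b, f a b c d :=
        Finset.sum_congr rfl fun _ _ => Finset.sum_comm

/-- The composition of classical correlations is a classical correlation. -/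
theorem composition_of_classical {X Y Z : Type*} [Fintype X] [Fintype Y] [Fintype Z]
    (p : Y → Y → X → X → ℝ) (q : Z → Z → Y → Y → ℝ)
    (hp : IsCorrelation p) (hpc : IsClassical p)
    (hq : IsCorrelation q) (hqc : IsClassical q) :
    IsCorrelation (Comp q p) ∧ IsClassical (Comp q p) := by
  obtain ⟨hp0, hp1⟩ := hp
  obtain ⟨hq0, hq1⟩ := hq
  obtain ⟨n, μ, PA, PB, hμ0, hμ1, hPA0, hPA1, hPB0, hPB1, hpeq⟩ := hpc
  obtain ⟨m, ν, QA, QB, hν0, hν1, hQA0, hQA1, hQB0, hQB1, hqeq⟩ := hqc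
  constructor
  · constructor
    · intro zA zB xA xB
      exact Finset.sum_nonneg fun yA _ => Finset.sum_nonneg fun yB _ =>
        mul_nonneg (hq0 _ _ _ _) (hp0 _ _ _ _)
    · intro xA xB
      have key : ∀ yA yB, (∑ zA : Z, ∑ zB : Z, q zA zB yA yB * p yA yB xA xB)
          = p yA yB xA xB := by
        intro yA yB
        simp only [← Finset.sum_mul]
        rw [hq1, one_mul]
      calc (∑ zA : Z, ∑ zB : Z, Comp q p zA zB xA xB)
          = ∑ yA : Y, ∑ yB : Y, ∑ zA : Z, ∑ zB : Z, q zA zB yA yB * p yA yB xA xB := by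
            simp only [Comp]
            exact sum_comm4 _
        _ = ∑ yA : Y, ∑ yB : Y, p yA yB xA xB := by
            simp only [key]
        _ = 1 := hp1 xA xB
  · refine ⟨n * m,
      fun ω => μ (finProdFinEquiv.symm ω).1 * ν (finProdFinEquiv.symm ω).2,
      fun z x ω => ∑ y : Y, QA z y (finProdFinEquiv.symm ω).2 * PA y x (finProdFinEquiv.symm ω).1,
      fun z x ω => ∑ y : Y, QB z y (finProdFinEquiv.symm ω).2 * PB y x (finProdFinEquiv.symm ω).1,
      ?_, ?_, ?_, ?_, ?_, ?_, ?_⟩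
    · intro ω
      exact mul_nonneg (hμ0 _) (hν0 _)
    · rw [← Equiv.sum_comp finProdFinEquiv]
      simp only [Equiv.symm_apply_apply, Fintype.sum_prod_type, ← Finset.mul_sum, hν1, mul_one, hμ1]
    · intro z x ω
      exact Finset.sum_nonneg fun y _ => mul_nonneg (hQA0 _ _ _) (hPA0 _ _ _)
    · intro x ω
      rw [Finset.sum_comm]
      simp only [← Finset.sum_mul, hQA1, one_mul, hPA1]
    · intro z x ω
      exact Finset.sum_nonneg fun y _ => mul_nonneg (hQB0 _ _ _) (hPB0 _ _ _)
    · intro x ω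
      rw [Finset.sum_comm]
      simp only [← Finset.sum_mul, hQB1, one_mul, hPB1]
    · intro zA zB xA xB
      simp only [Comp, hqeq, hpeq]
      rw [← Equiv.sum_comp finProdFinEquiv]
      simp only [Equiv.symm_apply_apply, Fintype.sum_prod_type]
      simp only [Finset.mul_sum, Finset.sum_mul]
      conv_lhs => rw [sum_comm4]
      apply Finset.sum_congr rfl
      intro ω _
      apply Finset.sum_congr rfl
      intro v _
      rw [Finset.sum_comm]
      apply Finset.sum_congr rfl
      intro yB _
      apply Finset.sum_congr rfl
      intro yA _
      ring
end

section
/- If p is a quantum correlation from a finite set X to a finite set Y and q is a quantum correlation from Y to a finite set Z, then the composition q ∘ p is a quantum correlation from X to Z. -/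
/-!
Run the two quantum strategies side by side on the product state `ρ ⊗ ρ'`. On question `x`,
Alice measures her half of `ρ` with `E x`, uses the outcome `y` as the question for her half of
`ρ'` and answers with the outcome `z` of `E' y`; this is the POVM `z ↦ ∑ y, E x y ⊗ E' y z`, and
Bob does the same. Since the trace of a Kronecker product is the product of the traces, each pair
of intermediate outcomes contributes `q (zA, zB | yA, yB) · p (yA, yB | xA, xB)`.
-/
open Finset Matrix Kronecker
open scoped ComplexOrder

theorem IsCorrelation.comp {X Y Z : Type*} [Fintype X] [Fintype Y] [Fintype Z]
    {q : Z → Z → Y → Y → ℝ} {p : Y → Y → X → X → ℝ}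
    (hq : IsCorrelation q) (hp : IsCorrelation p) : IsCorrelation (Comp q p) := by
  refine ⟨fun zA zB xA xB => sum_nonneg fun yA _ => sum_nonneg fun yB _ =>
    mul_nonneg (hq.1 ..) (hp.1 ..), fun xA xB => ?_⟩
  calc ∑ zA, ∑ zB, Comp q p zA zB xA xB
      = ∑ yA, ∑ yB, (∑ zA, ∑ zB, q zA zB yA yB) * p yA yB xA xB := by
        simp_rw [Comp, sum_mul, sum_comm (s := (univ : Finset Z)) (t := (univ : Finset Y))]
    _ = 1 := by simp only [hq.2, one_mul, hp.2]

namespace Matrix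

theorem trace_submatrix_equiv {m n R : Type*} [Fintype m] [Fintype n] [AddCommMonoid R]
    (M : Matrix n n R) (e : m ≃ n) : (M.submatrix e e).trace = M.trace :=
  e.sum_comp fun i => M i i

variable {ι l m n p q r s t α : Type*}

theorem sum_kronecker [NonUnitalNonAssocSemiring α] (u : Finset ι) (A : ι → Matrix l m α)
    (B : Matrix n p α) : (∑ i ∈ u, A i) ⊗ₖ B = ∑ i ∈ u, A i ⊗ₖ B := by
  ext ⟨_, _⟩ ⟨_, _⟩; simp only [kronecker_apply, sum_apply, Finset.sum_mul]

theorem kronecker_sum [NonUnitalNonAssocSemiring α] (u : Finset ι) (A : Matrix l m α)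
    (B : ι → Matrix n p α) : A ⊗ₖ (∑ i ∈ u, B i) = ∑ i ∈ u, A ⊗ₖ B i := by
  ext ⟨_, _⟩ ⟨_, _⟩; simp only [kronecker_apply, sum_apply, Finset.mul_sum]

theorem kronecker_kronecker_kronecker_comm [CommSemigroup α] (A : Matrix l m α)
    (B : Matrix n p α) (C : Matrix q r α) (D : Matrix s t α) :
    (A ⊗ₖ B) ⊗ₖ (C ⊗ₖ D) = ((A ⊗ₖ C) ⊗ₖ (B ⊗ₖ D)).submatrix
      (Equiv.prodProdProdComm l n q s) (Equiv.prodProdProdComm m p r t) := by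
  ext ⟨⟨_, _⟩, _, _⟩ ⟨⟨_, _⟩, _, _⟩
  exact mul_mul_mul_comm ..

theorem trace_submatrix_prodProdProdComm_mul_kronecker {A A' B B' : Type*} [Fintype A]
    [Fintype A'] [Fintype B] [Fintype B'] [CommSemiring α] (ρ : Matrix (A × B) (A × B) α)
    (ρ' : Matrix (A' × B') (A' × B') α) (M : Matrix A A α) (M' : Matrix A' A' α)
    (N : Matrix B B α) (N' : Matrix B' B' α) :
    ((ρ ⊗ₖ ρ').submatrix (Equiv.prodProdProdComm A A' B B') (Equiv.prodProdProdComm A A' B B') *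
        ((M ⊗ₖ M') ⊗ₖ (N ⊗ₖ N'))).trace =
      (ρ * (M ⊗ₖ N)).trace * (ρ' * (M' ⊗ₖ N')).trace := by
  rw [kronecker_kronecker_kronecker_comm, submatrix_mul_equiv, trace_submatrix_equiv,
    ← mul_kronecker_mul, trace_kronecker]

end Matrix

def IsPOVM {ι n : Type*} [Fintype ι] [Fintype n] [DecidableEq n] (E : ι → Matrix n n ℂ) :
    Prop :=
  (∀ i, (E i).PosSemidef) ∧ ∑ i, E i = 1

namespace IsPOVM

variable {ι κ m n : Type*} [Fintype ι] [Fintype κ] [Fintype m] [Fintype n] [DecidableEq m]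
  [DecidableEq n]

theorem submatrix {E : ι → Matrix n n ℂ} (hE : IsPOVM E) (e : m ≃ n) :
    IsPOVM fun i => (E i).submatrix e e := by
  refine ⟨fun i => (posSemidef_submatrix_equiv e).2 (hE.1 i), ?_⟩
  rw [← submatrix_one_equiv e, ← hE.2]
  ext; simp only [submatrix_apply, Matrix.sum_apply]

theorem sum_kronecker {E : ι → Matrix m m ℂ} {E' : ι → κ → Matrix n n ℂ} (hE : IsPOVM E)
    (hE' : ∀ i, IsPOVM (E' i)) : IsPOVM fun k => ∑ i, E i ⊗ₖ E' i k := by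
  refine ⟨fun k => posSemidef_sum _ fun i _ => (hE.1 i).kronecker ((hE' i).1 k), ?_⟩
  rw [sum_comm]
  simp_rw [← Matrix.kronecker_sum, (hE' _).2, ← Matrix.sum_kronecker, hE.2, one_kronecker_one]

end IsPOVM

structure IsQuantumModel {X Y A B : Type*} [Fintype Y] [Fintype A] [Fintype B] [DecidableEq A]
    [DecidableEq B] (p : Y → Y → X → X → ℝ) (ρ : Matrix (A × B) (A × B) ℂ)
    (E : X → Y → Matrix A A ℂ) (F : X → Y → Matrix B B ℂ) : Prop where
  posSemidef_state : ρ.PosSemidef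
  trace_state : ρ.trace = 1
  isPOVM_left : ∀ x, IsPOVM (E x)
  isPOVM_right : ∀ x, IsPOVM (F x)
  trace_mul_kronecker : ∀ yA yB xA xB, (ρ * (E xA yA ⊗ₖ F xB yB)).trace = p yA yB xA xB

theorem IsQuantum.exists_isQuantumModel {X Y : Type*} [Fintype X] [Fintype Y]
    {p : Y → Y → X → X → ℝ} (hp : IsQuantum p) :
    ∃ (dA dB : ℕ) (ρ : Matrix (Fin dA × Fin dB) (Fin dA × Fin dB) ℂ)
      (E : X → Y → Matrix (Fin dA) (Fin dA) ℂ) (F : X → Y → Matrix (Fin dB) (Fin dB) ℂ),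
      IsQuantumModel p ρ E F :=
  let ⟨dA, dB, _, _, ρ, E, F, hρ, htr, hE, hEs, hF, hFs, h⟩ := hp
  ⟨dA, dB, ρ, E, F, hρ, htr, fun x => ⟨hE x, hEs x⟩, fun x => ⟨hF x, hFs x⟩, h⟩

namespace IsQuantumModel

variable {X Y Z A A' B B' : Type*} [Fintype Y] [Fintype Z] [Fintype A] [Fintype A']
  [Fintype B] [Fintype B'] [DecidableEq A] [DecidableEq A'] [DecidableEq B] [DecidableEq B']

theorem submatrix {p : Y → Y → X → X → ℝ} {ρ : Matrix (A × B) (A × B) ℂ}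
    {E : X → Y → Matrix A A ℂ} {F : X → Y → Matrix B B ℂ} (h : IsQuantumModel p ρ E F)
    (eA : A' ≃ A) (eB : B' ≃ B) :
    IsQuantumModel p (ρ.submatrix (eA.prodCongr eB) (eA.prodCongr eB))
      (fun x y => (E x y).submatrix eA eA) (fun x y => (F x y).submatrix eB eB) where
  posSemidef_state := (posSemidef_submatrix_equiv _).2 h.posSemidef_state
  trace_state := by rw [trace_submatrix_equiv, h.trace_state]
  isPOVM_left x := (h.isPOVM_left x).submatrix eA
  isPOVM_right x := (h.isPOVM_right x).submatrix eB
  trace_mul_kronecker yA yB xA xB := by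
    rw [kroneckerMap_submatrix_submatrix, ← Equiv.prodCongr_apply, submatrix_mul_equiv,
      trace_submatrix_equiv, h.trace_mul_kronecker]

theorem isQuantum [Fintype X] {p : Y → Y → X → X → ℝ} {ρ : Matrix (A × B) (A × B) ℂ}
    {E : X → Y → Matrix A A ℂ} {F : X → Y → Matrix B B ℂ} (h : IsQuantumModel p ρ E F) :
    IsQuantum p := by
  obtain ⟨⟨a, b⟩⟩ : Nonempty (A × B) := not_isEmpty_iff.1 fun _ => by
    simpa [trace] using h.trace_state
  have hm := h.submatrix (Fintype.equivFin A).symm (Fintype.equivFin B).symm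
  exact ⟨_, _, Fintype.card_pos_iff.2 ⟨a⟩, Fintype.card_pos_iff.2 ⟨b⟩, _, _, _,
    hm.posSemidef_state, hm.trace_state, fun x => (hm.isPOVM_left x).1,
    fun x => (hm.isPOVM_left x).2, fun x => (hm.isPOVM_right x).1,
    fun x => (hm.isPOVM_right x).2, hm.trace_mul_kronecker⟩

theorem comp {p : Y → Y → X → X → ℝ} {q : Z → Z → Y → Y → ℝ} {ρ : Matrix (A × B) (A × B) ℂ}
    {E : X → Y → Matrix A A ℂ} {F : X → Y → Matrix B B ℂ} {ρ' : Matrix (A' × B') (A' × B') ℂ}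
    {E' : Y → Z → Matrix A' A' ℂ} {F' : Y → Z → Matrix B' B' ℂ}
    (hq : IsQuantumModel q ρ' E' F') (hp : IsQuantumModel p ρ E F) :
    IsQuantumModel (Comp q p)
      ((ρ ⊗ₖ ρ').submatrix (Equiv.prodProdProdComm A A' B B') (Equiv.prodProdProdComm A A' B B'))
      (fun x z => ∑ y, E x y ⊗ₖ E' y z) (fun x z => ∑ y, F x y ⊗ₖ F' y z) where
  posSemidef_state :=
    (posSemidef_submatrix_equiv _).2 (hp.posSemidef_state.kronecker hq.posSemidef_state)
  trace_state := by
    rw [trace_submatrix_equiv, trace_kronecker, hp.trace_state, hq.trace_state, mul_one]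
  isPOVM_left x := (hp.isPOVM_left x).sum_kronecker hq.isPOVM_left
  isPOVM_right x := (hp.isPOVM_right x).sum_kronecker hq.isPOVM_right
  trace_mul_kronecker zA zB xA xB := by
    simp_rw [Matrix.sum_kronecker, Matrix.kronecker_sum, Matrix.mul_sum, trace_sum,
      trace_submatrix_prodProdProdComm_mul_kronecker, hp.trace_mul_kronecker,
      hq.trace_mul_kronecker]
    simp only [Comp, Complex.ofReal_sum, Complex.ofReal_mul, mul_comm]

end IsQuantumModel

/-- The composition of quantum correlations is a quantum correlation. -/
theorem composition_of_quantum {X Y Z : Type*} [Fintype X] [Fintype Y] [Fintype Z]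
    (p : Y → Y → X → X → ℝ) (q : Z → Z → Y → Y → ℝ)
    (hp : IsCorrelation p) (hpq : IsQuantum p)
    (hq : IsCorrelation q) (hqq : IsQuantum q) :
    IsCorrelation (Comp q p) ∧ IsQuantum (Comp q p) := by
  refine ⟨hq.comp hp, ?_⟩
  obtain ⟨_, _, _, _, _, hmp⟩ := hpq.exists_isQuantumModel
  obtain ⟨_, _, _, _, _, hmq⟩ := hqq.exists_isQuantumModel
  exact (hmq.comp hmp).isQuantum
end

section
/- If p is a nonsignaling correlation from a finite set X to a finite set Y and q is a nonsignaling correlation from Y to a finite set Z, then the composition q ∘ p is a nonsignaling correlation from X to Z. -/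
open Finset Matrix Kronecker
open scoped ComplexOrder

/-- The composition of nonsignaling correlations is a nonsignaling correlation. -/
theorem composition_of_nonsignaling {X Y Z : Type*} [Fintype X] [Fintype Y] [Fintype Z]
    (p : Y → Y → X → X → ℝ) (q : Z → Z → Y → Y → ℝ)
    (hp : IsCorrelation p) (hpn : IsNonsignaling p)
    (hq : IsCorrelation q) (hqn : IsNonsignaling q) :
    IsCorrelation (Comp q p) ∧ IsNonsignaling (Comp q p) := by
  obtain ⟨hp0, hp1⟩ := hp
  obtain ⟨hq0, hq1⟩ := hq
  have keyA : ∀ (zA : Z) (xA xB : X),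
      (∑ zB : Z, Comp q p zA zB xA xB)
        = ∑ yA : Y, (∑ zB : Z, q zA zB yA yA) * (∑ yB : Y, p yA yB xA xB) := by
    intro zA xA xB
    simp only [Comp]
    rw [Finset.sum_comm]
    refine Finset.sum_congr rfl fun yA _ => ?_
    rw [Finset.sum_comm, Finset.mul_sum]
    refine Finset.sum_congr rfl fun yB _ => ?_
    rw [← Finset.sum_mul, hqn.1 zA yA yB yA]
  have keyB : ∀ (zB : Z) (xA xB : X),
      (∑ zA : Z, Comp q p zA zB xA xB)
        = ∑ yB : Y, (∑ zA : Z, q zA zB yB yB) * (∑ yA : Y, p yA yB xA xB) := by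
    intro zB xA xB
    simp only [Comp]
    rw [Finset.sum_comm]
    have e2 : (∑ yA : Y, ∑ zA : Z, ∑ yB : Y, q zA zB yA yB * p yA yB xA xB)
        = ∑ yA : Y, ∑ yB : Y, ∑ zA : Z, q zA zB yA yB * p yA yB xA xB :=
      Finset.sum_congr rfl fun yA _ => by rw [Finset.sum_comm]
    have e3 : (∑ yA : Y, ∑ yB : Y, ∑ zA : Z, q zA zB yA yB * p yA yB xA xB)
        = ∑ yB : Y, ∑ yA : Y, ∑ zA : Z, q zA zB yA yB * p yA yB xA xB := by
      rw [Finset.sum_comm]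
    rw [e2, e3]
    refine Finset.sum_congr rfl fun yB _ => ?_
    rw [Finset.mul_sum]
    refine Finset.sum_congr rfl fun yA _ => ?_
    rw [← Finset.sum_mul, hqn.2 zB yA yB yB]
  refine ⟨⟨fun zA zB xA xB => Finset.sum_nonneg fun yA _ => Finset.sum_nonneg
      fun yB _ => mul_nonneg (hq0 zA zB yA yB) (hp0 yA yB xA xB), fun xA xB => ?_⟩,
    fun zA xA xB xB' => ?_, fun zB xA xA' xB => ?_⟩
  · rw [show (∑ zA : Z, ∑ zB : Z, Comp q p zA zB xA xB)
        = ∑ zA : Z, ∑ yA : Y, (∑ zB : Z, q zA zB yA yA) * (∑ yB : Y, p yA yB xA xB) from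
      Finset.sum_congr rfl fun zA _ => keyA zA xA xB]
    rw [Finset.sum_comm]
    have : ∀ yA : Y, (∑ zA : Z, (∑ zB : Z, q zA zB yA yA) * (∑ yB : Y, p yA yB xA xB))
        = ∑ yB : Y, p yA yB xA xB := by
      intro yA
      rw [← Finset.sum_mul, hq1 yA yA, one_mul]
    rw [Finset.sum_congr rfl fun yA _ => this yA, hp1]
  · rw [keyA zA xA xB, keyA zA xA xB']
    exact Finset.sum_congr rfl fun yA _ => by rw [hpn.1 yA xA xB xB']
  · rw [keyB zB xA xB, keyB zB xA' xB]
    exact Finset.sum_congr rfl fun yB _ => by rw [hpn.2 yB xA xA' xB]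
end

section
/- A synchronous correlation p from a finite set X to a finite set Y is a monomorphism (i.e., for every finite set U and every pair of synchronous correlations q_1, q_2 from U to X, p ∘ q_1 = p ∘ q_2 implies q_1 = q_2) if and only if the stochastic matrix of p has zero right nullspace. -/
open Finset Matrix Kronecker
open scoped ComplexOrder

private lemma sum4_comm {α β γ δ : Type*} [Fintype α] [Fintype β] [Fintype γ] [Fintype δ]
    (f : α → β → γ → δ → ℝ) :
    ∑ a : α, ∑ b : β, ∑ c : γ, ∑ d : δ, f a b c d
      = ∑ c : γ, ∑ d : δ, ∑ a : α, ∑ b : β, f a b c d := by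
  calc ∑ a : α, ∑ b : β, ∑ c : γ, ∑ d : δ, f a b c d
      = ∑ a : α, ∑ c : γ, ∑ b : β, ∑ d : δ, f a b c d :=
        Finset.sum_congr rfl (fun a _ => Finset.sum_comm)
    _ = ∑ c : γ, ∑ a : α, ∑ b : β, ∑ d : δ, f a b c d := Finset.sum_comm
    _ = ∑ c : γ, ∑ a : α, ∑ d : δ, ∑ b : β, f a b c d :=
        Finset.sum_congr rfl (fun c _ => Finset.sum_congr rfl fun a _ => Finset.sum_comm)
    _ = ∑ c : γ, ∑ d : δ, ∑ a : α, ∑ b : β, f a b c d :=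
        Finset.sum_congr rfl (fun c _ => Finset.sum_comm)

/-- In the category of synchronous correlations, monomorphisms are precisely the
correlations whose stochastic matrix has zero right nullspace. -/
theorem mono_iff_zero_right_nullspace {X Y : Type*} [Fintype X] [Fintype Y]
    (p : Y → Y → X → X → ℝ) (hp : IsCorrelation p) (hps : IsSynchronous p) :
    (∀ (U : Type) [Fintype U] (q₁ q₂ : X → X → U → U → ℝ),
      IsCorrelation q₁ → IsSynchronous q₁ →
      IsCorrelation q₂ → IsSynchronous q₂ →
      Comp p q₁ = Comp p q₂ → q₁ = q₂) ↔
    (∀ u : X → X → ℝ,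
      (∀ yA yB, (∑ xA : X, ∑ xB : X, p yA yB xA xB * u xA xB) = 0) → u = 0) := by
  classical
  constructor
  · -- mono → zero right nullspace
    intro hmono u hu
    by_contra hne
    have hex : ∃ a b, u a b ≠ 0 := by
      by_contra h; push_neg at h
      exact hne (funext fun a => funext fun b => h a b)
    obtain ⟨a0, b0, hab⟩ := hex
    haveI : Nonempty X := ⟨a0⟩
    set n : ℝ := (Fintype.card X : ℝ) with hn
    have hnpos : 0 < n := by
      simp only [hn, Nat.cast_pos]
      exact Fintype.card_pos
    set S : ℝ := ∑ a : X, ∑ b : X, |u a b| with hS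
    have hbound : ∀ a b : X, |u a b| ≤ S := by
      intro a b
      have h1 : |u a b| ≤ ∑ b' : X, |u a b'| :=
        Finset.single_le_sum (f := fun b' => |u a b'|) (fun i _ => abs_nonneg _)
          (Finset.mem_univ b)
      have h2 : (∑ b' : X, |u a b'|) ≤ S :=
        Finset.single_le_sum (f := fun a' => ∑ b' : X, |u a' b'|)
          (fun i _ => Finset.sum_nonneg fun _ _ => abs_nonneg _) (Finset.mem_univ a)
      linarith
    have hSpos : 0 < S := lt_of_lt_of_le (abs_pos.mpr hab) (hbound a0 b0)
    set ε : ℝ := (n ^ 2 * S)⁻¹ with hε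
    have hεpos : 0 < ε := by positivity
    have hεS : ε * S = (n ^ 2)⁻¹ := by
      rw [hε, mul_inv, mul_assoc, inv_mul_cancel₀ (ne_of_gt hSpos), mul_one]
    -- sum of u vanishes
    have hsumu : (∑ a : X, ∑ b : X, u a b) = 0 := by
      have h2 : ∀ a b : X, (∑ yA : Y, ∑ yB : Y, p yA yB a b * u a b) = u a b := by
        intro a b
        simp only [← Finset.sum_mul]
        rw [hp.2 a b, one_mul]
      calc (∑ a : X, ∑ b : X, u a b)
          = ∑ a : X, ∑ b : X, ∑ yA : Y, ∑ yB : Y, p yA yB a b * u a b := by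
            exact Finset.sum_congr rfl fun a _ =>
              Finset.sum_congr rfl fun b _ => (h2 a b).symm
        _ = ∑ yA : Y, ∑ yB : Y, ∑ a : X, ∑ b : X, p yA yB a b * u a b :=
            sum4_comm _
        _ = 0 := by simp [hu]
    -- the two correlations
    set Q : X → X → Bool → Bool → ℝ := fun xA xB uA uB =>
      if uA = uB then (if xA = a0 then (1:ℝ) else 0) * (if xB = a0 then (1:ℝ) else 0)
      else (n ^ 2)⁻¹ with hQ
    set q1 : X → X → Bool → Bool → ℝ := fun xA xB uA uB =>
      Q xA xB uA uB + (if uA = uB then 0 else ε * u xA xB) with hq1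
    have hQsum : ∀ uA uB : Bool, (∑ a : X, ∑ b : X, Q a b uA uB) = 1 := by
      intro uA uB
      by_cases h : uA = uB
      · simp only [hQ, if_pos h]
        rw [← Finset.sum_mul_sum]
        simp [Finset.sum_ite_eq']
      · simp only [hQ, if_neg h, Finset.sum_const, Finset.card_univ, nsmul_eq_mul, ← hn]
        rw [sq, mul_inv]
        have hn0 : n ≠ 0 := ne_of_gt hnpos
        field_simp
    have hQcorr : IsCorrelation Q := by
      refine ⟨?_, ?_⟩
      · intro a b uA uB
        simp only [hQ]
        by_cases h : uA = uB
        · rw [if_pos h]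
          exact mul_nonneg (by split <;> norm_num) (by split <;> norm_num)
        · rw [if_neg h]; positivity
      · intro uA uB
        exact hQsum uA uB
    have hQsync : IsSynchronous Q := by
      intro x a b hab'
      simp only [hQ, if_pos rfl]
      by_cases hb : b = a0
      · have ha : a ≠ a0 := fun hh => hab' (hh.trans hb.symm)
        rw [if_neg ha, zero_mul]
      · rw [if_neg hb, mul_zero]
    have hq1corr : IsCorrelation q1 := by
      refine ⟨?_, ?_⟩
      · intro a b uA uB
        by_cases h : uA = uB
        · simp only [hq1, if_pos h, add_zero]
          exact hQcorr.1 a b uA uB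
        · simp only [hq1, hQ, if_neg h]
          have h1 : ε * |u a b| ≤ ε * S := by
            exact mul_le_mul_of_nonneg_left (hbound a b) (le_of_lt hεpos)
          have h2 : -(ε * |u a b|) ≤ ε * u a b := by
            have := neg_abs_le (u a b)
            nlinarith
          nlinarith [abs_nonneg (u a b)]
      · intro uA uB
        by_cases h : uA = uB
        · simp only [hq1, if_pos h, add_zero]
          exact hQsum uA uB
        · simp only [hq1, if_neg h, Finset.sum_add_distrib]
          rw [hQsum uA uB]
          have : (∑ a : X, ∑ b : X, ε * u a b) = ε * ∑ a : X, ∑ b : X, u a b := by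
            simp [Finset.mul_sum]
          rw [this, hsumu, mul_zero, add_zero]
    have hq1sync : IsSynchronous q1 := by
      intro x a b hab'
      simp [hq1, hQsync x a b hab']
    have hcomp : Comp p q1 = Comp p Q := by
      funext yA yB uA uB
      simp only [Comp]
      by_cases h : uA = uB
      · exact Finset.sum_congr rfl fun a _ => Finset.sum_congr rfl fun b _ => by
          simp [hq1, h]
      · have expand : ∀ a b : X, p yA yB a b * q1 a b uA uB
            = p yA yB a b * Q a b uA uB + ε * (p yA yB a b * u a b) := by
          intro a b
          simp only [hq1, if_neg h]
          ring
        calc (∑ a : X, ∑ b : X, p yA yB a b * q1 a b uA uB)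
            = (∑ a : X, ∑ b : X, (p yA yB a b * Q a b uA uB + ε * (p yA yB a b * u a b))) :=
              Finset.sum_congr rfl fun a _ => Finset.sum_congr rfl fun b _ => expand a b
          _ = (∑ a : X, ∑ b : X, p yA yB a b * Q a b uA uB)
              + ε * ∑ a : X, ∑ b : X, p yA yB a b * u a b := by
              simp [Finset.sum_add_distrib, Finset.mul_sum]
          _ = ∑ a : X, ∑ b : X, p yA yB a b * Q a b uA uB := by
              rw [hu yA yB, mul_zero, add_zero]
    have heq := hmono Bool q1 Q hq1corr hq1sync hQcorr hQsync hcomp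
    have hval := congrFun (congrFun (congrFun (congrFun heq a0) b0) false) true
    simp only [hq1] at hval
    rw [if_neg (by simp)] at hval
    have : ε * u a0 b0 = 0 := by linarith
    exact hab (by
      rcases mul_eq_zero.mp this with h | h
      · exact absurd h (ne_of_gt hεpos)
      · exact h)
  · -- zero right nullspace → mono
    intro hns U _ q₁ q₂ _ _ _ _ hcomp
    funext xA xB uA uB
    have h := hns (fun a b => q₁ a b uA uB - q₂ a b uA uB) ?_
    · have := congrFun (congrFun h xA) xB
      simpa [sub_eq_zero] using this
    · intro yA yB
      have hc := congrFun (congrFun (congrFun (congrFun hcomp yA) yB) uA) uB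
      simp only [Comp] at hc
      simp [mul_sub, Finset.sum_sub_distrib, hc]
end

section
/- Let p be a synchronous nonsignaling correlation from a finite set X to a finite set Y and let u : X × X → ℝ satisfy ∑_{x_A, x_B ∈ X} p(y_A, y_B | x_A, x_B) u(x_A, x_B) = 0 for all y_A, y_B ∈ Y. Define w_1(x_A, x_B) = 1[x_A = x_B]·∑_{z ∈ X} u(x_A, z) and w_2(x_A, x_B) = 1[x_A = x_B]·∑_{z ∈ X} u(z, x_B). Then ∑_{x_A, x_B ∈ X} p(y_A, y_B | x_A, x_B) w_1(x_A, x_B) = 0 and ∑_{x_A, x_B ∈ X} p(y_A, y_B | x_A, x_B) w_2(x_A, x_B) = 0 for all y_A, y_B ∈ Y. -/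
open Finset Matrix Kronecker
open scoped ComplexOrder

/-- For a synchronous nonsignaling correlation, the nullspace vectors `w₁` and `w₂`
built from a nullspace vector `u` are again in the right nullspace. -/
theorem nullspace_marginals {X Y : Type*} [Fintype X] [Fintype Y] [DecidableEq X]
    (p : Y → Y → X → X → ℝ)
    (hp : IsCorrelation p) (hps : IsSynchronous p) (hpn : IsNonsignaling p)
    (u : X → X → ℝ)
    (hu : ∀ yA yB, (∑ xA : X, ∑ xB : X, p yA yB xA xB * u xA xB) = 0)
    (w₁ w₂ : X → X → ℝ)
    (hw₁ : w₁ = fun xA xB => (if xA = xB then (1 : ℝ) else 0) * ∑ z : X, u xA z)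
    (hw₂ : w₂ = fun xA xB => (if xA = xB then (1 : ℝ) else 0) * ∑ z : X, u z xB) :
    (∀ yA yB, (∑ xA : X, ∑ xB : X, p yA yB xA xB * w₁ xA xB) = 0) ∧
    (∀ yA yB, (∑ xA : X, ∑ xB : X, p yA yB xA xB * w₂ xA xB) = 0) := by
  have hA : ∀ yA xA xB, (∑ yB : Y, p yA yB xA xB) = p yA yA xA xA := by
    intro yA xA xB
    rw [hpn.1 yA xA xB xA]
    exact Finset.sum_eq_single yA (fun b _ hb => hps xA yA b (Ne.symm hb))
      (by intro h; exact absurd (Finset.mem_univ yA) h)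
  have hB : ∀ yB xA xB, (∑ yA : Y, p yA yB xA xB) = p yB yB xB xB := by
    intro yB xA xB
    rw [hpn.2 yB xA xB xB]
    exact Finset.sum_eq_single yB (fun b _ hb => hps xB b yB hb)
      (by intro h; exact absurd (Finset.mem_univ yB) h)
  subst hw₁ hw₂
  have key1 : ∀ yA yB, (∑ xA : X, ∑ xB : X, p yA yB xA xB *
      ((if xA = xB then (1:ℝ) else 0) * ∑ z : X, u xA z))
      = ∑ xA : X, p yA yB xA xA * ∑ z : X, u xA z := by
    intro yA yB
    refine Finset.sum_congr rfl fun xA _ => ?_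
    rw [Finset.sum_eq_single xA]
    · simp
    · intro b _ hb; rw [if_neg (Ne.symm hb)]; ring
    · intro h; exact absurd (Finset.mem_univ xA) h
  have key2 : ∀ yA yB, (∑ xA : X, ∑ xB : X, p yA yB xA xB *
      ((if xA = xB then (1:ℝ) else 0) * ∑ z : X, u z xB))
      = ∑ xA : X, p yA yB xA xA * ∑ z : X, u z xA := by
    intro yA yB
    refine Finset.sum_congr rfl fun xA _ => ?_
    rw [Finset.sum_eq_single xA]
    · simp
    · intro b _ hb; rw [if_neg (Ne.symm hb)]; ring
    · intro h; exact absurd (Finset.mem_univ xA) h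
  have diag1 : ∀ yA, (∑ xA : X, p yA yA xA xA * ∑ z : X, u xA z) = 0 := by
    intro yA
    calc (∑ xA : X, p yA yA xA xA * ∑ z : X, u xA z)
        = ∑ xA : X, ∑ z : X, ∑ yB : Y, p yA yB xA z * u xA z := by
          refine Finset.sum_congr rfl fun xA _ => ?_
          rw [Finset.mul_sum]
          refine Finset.sum_congr rfl fun z _ => ?_
          rw [← Finset.sum_mul, hA yA xA z]
      _ = ∑ xA : X, ∑ yB : Y, ∑ z : X, p yA yB xA z * u xA z :=
          Finset.sum_congr rfl fun xA _ => Finset.sum_comm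
      _ = ∑ yB : Y, ∑ xA : X, ∑ z : X, p yA yB xA z * u xA z := Finset.sum_comm
      _ = 0 := Finset.sum_eq_zero fun yB _ => hu yA yB
  have diag2 : ∀ yB, (∑ xB : X, p yB yB xB xB * ∑ z : X, u z xB) = 0 := by
    intro yB
    calc (∑ xB : X, p yB yB xB xB * ∑ z : X, u z xB)
        = ∑ xB : X, ∑ z : X, ∑ yA : Y, p yA yB z xB * u z xB := by
          refine Finset.sum_congr rfl fun xB _ => ?_
          rw [Finset.mul_sum]
          refine Finset.sum_congr rfl fun z _ => ?_
          rw [← Finset.sum_mul, hB yB z xB]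
      _ = ∑ xB : X, ∑ yA : Y, ∑ z : X, p yA yB z xB * u z xB :=
          Finset.sum_congr rfl fun xB _ => Finset.sum_comm
      _ = ∑ yA : Y, ∑ xB : X, ∑ z : X, p yA yB z xB * u z xB := Finset.sum_comm
      _ = ∑ yA : Y, ∑ z : X, ∑ xB : X, p yA yB z xB * u z xB :=
          Finset.sum_congr rfl fun yA _ => Finset.sum_comm
      _ = 0 := Finset.sum_eq_zero fun yA _ => hu yA yB
  constructor
  · intro yA yB
    rw [key1]
    by_cases h : yA = yB
    · subst h; exact diag1 yA
    · exact Finset.sum_eq_zero fun xA _ => by rw [hps xA yA yB h, zero_mul]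
  · intro yA yB
    rw [key2]
    by_cases h : yA = yB
    · subst h; exact diag2 yA
    · exact Finset.sum_eq_zero fun xA _ => by rw [hps xA yA yB h, zero_mul]
end

section
/- A synchronous classical correlation p from a finite set X to a finite set Y is a monomorphism in the category whose morphisms are synchronous classical correlations (i.e., for every finite set U and every pair of synchronous classical correlations q_1, q_2 from U to X, p ∘ q_1 = p ∘ q_2 implies q_1 = q_2) if and only if the stochastic matrix of p has zero right nullspace. -/
open Finset Matrix Kronecker
open scoped ComplexOrder

lemma sum_swap4 {A B : Type*} [Fintype A] [Fintype B] (f : A → A → B → B → ℝ) :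
    (∑ a1 : A, ∑ a2 : A, ∑ b1 : B, ∑ b2 : B, f a1 a2 b1 b2)
    = ∑ b1 : B, ∑ b2 : B, ∑ a1 : A, ∑ a2 : A, f a1 a2 b1 b2 := by
  calc (∑ a1 : A, ∑ a2 : A, ∑ b1 : B, ∑ b2 : B, f a1 a2 b1 b2)
      = ∑ a1 : A, ∑ b1 : B, ∑ a2 : A, ∑ b2 : B, f a1 a2 b1 b2 :=
        Finset.sum_congr rfl fun a1 _ => Finset.sum_comm
    _ = ∑ b1 : B, ∑ a1 : A, ∑ a2 : A, ∑ b2 : B, f a1 a2 b1 b2 := Finset.sum_comm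
    _ = ∑ b1 : B, ∑ a1 : A, ∑ b2 : B, ∑ a2 : A, f a1 a2 b1 b2 :=
        Finset.sum_congr rfl fun b1 _ => Finset.sum_congr rfl fun a1 _ => Finset.sum_comm
    _ = ∑ b1 : B, ∑ b2 : B, ∑ a1 : A, ∑ a2 : A, f a1 a2 b1 b2 :=
        Finset.sum_congr rfl fun b1 _ => Finset.sum_comm

section Aux
variable {X : Type*} [Fintype X] [DecidableEq X]

def Qcorr (ν : X → X → ℝ) : X → X → Fin 2 → Fin 2 → ℝ :=
  fun xA xB uA uB => ∑ x₁ : X, ∑ x₂ : X,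
    ν x₁ x₂ * ((if xA = (if uA = 0 then x₁ else x₂) then (1:ℝ) else 0) *
               (if xB = (if uB = 0 then x₁ else x₂) then (1:ℝ) else 0))

lemma Qcorr_01 (ν : X → X → ℝ) (xA xB : X) : Qcorr ν xA xB 0 1 = ν xA xB := by
  simp [Qcorr, mul_ite, Finset.sum_ite_eq]

lemma Qcorr_10 (ν : X → X → ℝ) (xA xB : X) : Qcorr ν xA xB 1 0 = ν xB xA := by
  simp [Qcorr, mul_ite, Finset.sum_ite_eq]

lemma Qcorr_00 (ν : X → X → ℝ) (xA xB : X) :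
    Qcorr ν xA xB 0 0 = if xA = xB then ∑ x₂ : X, ν xA x₂ else 0 := by
  simp only [Qcorr, reduceIte, if_neg (by decide : ¬(1:Fin 2) = 0)]
  rcases eq_or_ne xA xB with h | h
  · subst h
    simp [mul_ite, Finset.sum_ite_eq]
  · rw [if_neg h]
    refine Finset.sum_eq_zero fun x₁ _ => Finset.sum_eq_zero fun x₂ _ => ?_
    rcases eq_or_ne xA x₁ with h1 | h1
    · subst h1; rw [if_neg (fun hh : xB = xA => h hh.symm)]; ring
    · rw [if_neg h1]; ring

lemma Qcorr_11 (ν : X → X → ℝ) (xA xB : X) :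
    Qcorr ν xA xB 1 1 = if xA = xB then ∑ x₁ : X, ν x₁ xA else 0 := by
  simp only [Qcorr, reduceIte, if_neg (by decide : ¬(1:Fin 2) = 0)]
  rcases eq_or_ne xA xB with h | h
  · subst h
    simp [mul_ite, Finset.sum_ite_eq]
  · rw [if_neg h]
    refine Finset.sum_eq_zero fun x₁ _ => Finset.sum_eq_zero fun x₂ _ => ?_
    rcases eq_or_ne xA x₂ with h1 | h1
    · subst h1; rw [if_neg (fun hh : xB = xA => h hh.symm)]; ring
    · rw [if_neg h1]; ring


lemma Qcorr_corr (ν : X → X → ℝ) (hν0 : ∀ a b, 0 ≤ ν a b)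
    (hν1 : (∑ a : X, ∑ b : X, ν a b) = 1) : IsCorrelation (Qcorr ν) := by
  constructor
  · intro xA xB uA uB
    refine Finset.sum_nonneg fun x₁ _ => Finset.sum_nonneg fun x₂ _ => ?_
    have := hν0 x₁ x₂
    positivity
  · intro uA uB
    unfold Qcorr
    rw [sum_swap4 (fun xA xB x₁ x₂ => ν x₁ x₂ *
      ((if xA = (if uA = 0 then x₁ else x₂) then (1:ℝ) else 0) *
       (if xB = (if uB = 0 then x₁ else x₂) then (1:ℝ) else 0)))]
    calc _ = ∑ x₁ : X, ∑ x₂ : X, ν x₁ x₂ := Finset.sum_congr rfl fun x₁ _ =>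
            Finset.sum_congr rfl fun x₂ _ => by simp [mul_ite, Finset.sum_ite_eq']
      _ = 1 := hν1

lemma Qcorr_sync (ν : X → X → ℝ) : IsSynchronous (Qcorr ν) := by
  intro u xA xB hne
  refine Finset.sum_eq_zero fun x₁ _ => Finset.sum_eq_zero fun x₂ _ => ?_
  rcases eq_or_ne xA (if u = 0 then x₁ else x₂) with h | h
  · have hB : xB ≠ (if u = 0 then x₁ else x₂) := fun hh => hne (by rw [h, hh])
    rw [if_neg hB]; ring
  · rw [if_neg h]; ring

lemma Qcorr_classical (ν : X → X → ℝ) (hν0 : ∀ a b, 0 ≤ ν a b)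
    (hν1 : (∑ a : X, ∑ b : X, ν a b) = 1) : IsClassical (Qcorr ν) := by
  set e : Fin (Fintype.card (X × X)) ≃ X × X := (Fintype.equivFin (X × X)).symm with he
  refine ⟨Fintype.card (X × X), fun ω => ν (e ω).1 (e ω).2,
    fun x u ω => if x = (if u = 0 then (e ω).1 else (e ω).2) then 1 else 0,
    fun x u ω => if x = (if u = 0 then (e ω).1 else (e ω).2) then 1 else 0,
    fun ω => hν0 _ _, ?_, ?_, ?_, ?_, ?_, ?_⟩
  · rw [Fintype.sum_equiv e _ (fun pr : X × X => ν pr.1 pr.2) (fun ω => rfl),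
      Fintype.sum_prod_type]
    exact hν1
  · intro x u ω; positivity
  · intro u ω; simp
  · intro x u ω; positivity
  · intro u ω; simp
  · intro xA xB uA uB
    have h2 : (∑ ω, ν (e ω).1 (e ω).2 *
        (if xA = (if uA = 0 then (e ω).1 else (e ω).2) then (1:ℝ) else 0) *
        (if xB = (if uB = 0 then (e ω).1 else (e ω).2) then (1:ℝ) else 0))
        = ∑ pr : X × X, ν pr.1 pr.2 *
        (if xA = (if uA = 0 then pr.1 else pr.2) then (1:ℝ) else 0) *
        (if xB = (if uB = 0 then pr.1 else pr.2) then (1:ℝ) else 0) :=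
      Fintype.sum_equiv e _ _ (fun ω => rfl)
    rw [h2, Fintype.sum_prod_type]
    unfold Qcorr
    refine Finset.sum_congr rfl fun x₁ _ => Finset.sum_congr rfl fun x₂ _ => by ring

end Aux


/-- In the category of synchronous classical correlations, monomorphisms are precisely
the correlations whose stochastic matrix has zero right nullspace. -/
theorem classical_mono_iff_zero_right_nullspace {X Y : Type*} [Fintype X] [Fintype Y]
    (p : Y → Y → X → X → ℝ)
    (hp : IsCorrelation p) (hps : IsSynchronous p) (hpc : IsClassical p) :
    (∀ (U : Type) [Fintype U] (q₁ q₂ : X → X → U → U → ℝ),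
      IsCorrelation q₁ → IsSynchronous q₁ → IsClassical q₁ →
      IsCorrelation q₂ → IsSynchronous q₂ → IsClassical q₂ →
      Comp p q₁ = Comp p q₂ → q₁ = q₂) ↔
    (∀ u : X → X → ℝ,
      (∀ yA yB, (∑ xA : X, ∑ xB : X, p yA yB xA xB * u xA xB) = 0) → u = 0) := by
  classical
  obtain ⟨n, μ, PrA, PrB, hμ0, hμ1, hA0, hA1, hB0, hB1, hrep⟩ := hpc
  -- each hidden-variable term is synchronous
  have h0 : ∀ (x : X) (y y' : Y) (ω : Fin n), y ≠ y' →
      μ ω * PrA y x ω * PrB y' x ω = 0 := by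
    intro x y y' ω hne
    have hz := hps x y y' hne
    rw [hrep] at hz
    exact (Finset.sum_eq_zero_iff_of_nonneg (fun ω _ => by
      have := hμ0 ω; have := hA0 y x ω; have := hB0 y' x ω; positivity)).mp hz ω
      (Finset.mem_univ ω)
  have hl1 : ∀ (y : Y) (x : X) (ω : Fin n),
      μ ω * PrA y x ω * PrB y x ω = μ ω * PrA y x ω := by
    intro y x ω
    have e1 : μ ω * PrA y x ω = ∑ y' : Y, μ ω * PrA y x ω * PrB y' x ω := by
      simp_rw [mul_assoc, ← Finset.mul_sum, ← mul_assoc]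
      rw [hB1 x ω, mul_one]
    calc μ ω * PrA y x ω * PrB y x ω
        = ∑ y' : Y, μ ω * PrA y x ω * PrB y' x ω :=
          (Finset.sum_eq_single y (fun b _ hb => h0 x y b ω (fun hh => hb hh.symm))
            (fun hmem => absurd (Finset.mem_univ y) hmem)).symm
      _ = μ ω * PrA y x ω := e1.symm
  have hl2 : ∀ (y : Y) (x : X) (ω : Fin n),
      μ ω * PrA y x ω * PrB y x ω = μ ω * PrB y x ω := by
    intro y x ω
    have e1 : μ ω * PrB y x ω = ∑ y' : Y, μ ω * PrA y' x ω * PrB y x ω := by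
      have : ∀ y' : Y, μ ω * PrA y' x ω * PrB y x ω
          = μ ω * PrB y x ω * PrA y' x ω := fun y' => by ring
      simp_rw [this, ← Finset.mul_sum]
      rw [hA1 x ω, mul_one]
    calc μ ω * PrA y x ω * PrB y x ω
        = ∑ y' : Y, μ ω * PrA y' x ω * PrB y x ω :=
          (Finset.sum_eq_single y (fun b _ hb => h0 x b y ω hb)
            (fun hmem => absurd (Finset.mem_univ y) hmem)).symm
      _ = μ ω * PrB y x ω := e1.symm
  have hAB : ∀ (y : Y) (x : X) (ω : Fin n), μ ω * PrA y x ω = μ ω * PrB y x ω := by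
    intro y x ω; rw [← hl1 y x ω, hl2 y x ω]
  have hsym : ∀ yA yB xA xB, p yA yB xA xB = p yB yA xB xA := by
    intro yA yB xA xB
    rw [hrep, hrep]
    refine Finset.sum_congr rfl fun ω _ => ?_
    calc μ ω * PrA yA xA ω * PrB yB xB ω
        = (μ ω * PrA yA xA ω) * PrB yB xB ω := by ring
      _ = (μ ω * PrB yA xA ω) * PrB yB xB ω := by rw [hAB]
      _ = (μ ω * PrB yB xB ω) * PrB yA xA ω := by ring
      _ = (μ ω * PrA yB xB ω) * PrB yA xA ω := by rw [hAB]
      _ = μ ω * PrA yB xB ω * PrB yA xA ω := by ring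
  have hmargA : ∀ (y : Y) (xA xB : X), (∑ yB : Y, p y yB xA xB) = p y y xA xA := by
    intro y xA xB
    have lhs : (∑ yB : Y, p y yB xA xB) = ∑ ω, μ ω * PrA y xA ω := by
      calc (∑ yB : Y, p y yB xA xB)
          = ∑ yB : Y, ∑ ω, μ ω * PrA y xA ω * PrB yB xB ω :=
            Finset.sum_congr rfl fun yB _ => hrep y yB xA xB
        _ = ∑ ω, ∑ yB : Y, μ ω * PrA y xA ω * PrB yB xB ω := Finset.sum_comm
        _ = ∑ ω, μ ω * PrA y xA ω := Finset.sum_congr rfl fun ω _ => by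
            simp_rw [mul_assoc, ← Finset.mul_sum, ← mul_assoc]
            rw [hB1 xB ω, mul_one]
    have rhs : p y y xA xA = ∑ ω, μ ω * PrA y xA ω := by
      rw [hrep]
      exact Finset.sum_congr rfl fun ω _ => hl1 y xA ω
    rw [lhs, rhs]
  have hmargB : ∀ (y : Y) (xA xB : X), (∑ yA : Y, p yA y xA xB) = p y y xB xB := by
    intro y xA xB
    have lhs : (∑ yA : Y, p yA y xA xB) = ∑ ω, μ ω * PrB y xB ω := by
      calc (∑ yA : Y, p yA y xA xB)
          = ∑ yA : Y, ∑ ω, μ ω * PrA yA xA ω * PrB y xB ω :=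
            Finset.sum_congr rfl fun yA _ => hrep yA y xA xB
        _ = ∑ ω, ∑ yA : Y, μ ω * PrA yA xA ω * PrB y xB ω := Finset.sum_comm
        _ = ∑ ω, μ ω * PrB y xB ω := Finset.sum_congr rfl fun ω _ => by
            have : ∀ yA : Y, μ ω * PrA yA xA ω * PrB y xB ω
                = μ ω * PrB y xB ω * PrA yA xA ω := fun yA => by ring
            simp_rw [this, ← Finset.mul_sum]
            rw [hA1 xA ω, mul_one]
    have rhs : p y y xB xB = ∑ ω, μ ω * PrB y xB ω := by
      rw [hrep]
      exact Finset.sum_congr rfl fun ω _ => hl2 y xB ω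
    rw [lhs, rhs]
  constructor
  · -- mono implies zero right nullspace
    intro h u hu
    set up : X → X → ℝ := fun a b => max (u a b) 0 with hup
    set um : X → X → ℝ := fun a b => max (-u a b) 0 with hum
    have hdiff : ∀ a b, up a b - um a b = u a b := fun a b =>
      max_zero_sub_max_neg_zero_eq_self (u a b)
    have hup0 : ∀ a b, 0 ≤ up a b := fun a b => le_max_right _ _
    have hum0 : ∀ a b, 0 ≤ um a b := fun a b => le_max_right _ _
    set s : ℝ := ∑ a : X, ∑ b : X, up a b with hs
    have hsum : (∑ a : X, ∑ b : X, u a b) = 0 := by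
      have h1 : (∑ yA : Y, ∑ yB : Y, ∑ xA : X, ∑ xB : X,
          p yA yB xA xB * u xA xB) = 0 := by
        refine Finset.sum_eq_zero fun yA _ => Finset.sum_eq_zero fun yB _ => hu yA yB
      rw [sum_swap4 (fun yA yB xA xB => p yA yB xA xB * u xA xB)] at h1
      calc (∑ a : X, ∑ b : X, u a b)
          = ∑ a : X, ∑ b : X, (∑ yA : Y, ∑ yB : Y, p yA yB a b) * u a b :=
            Finset.sum_congr rfl fun a _ => Finset.sum_congr rfl fun b _ => by
              rw [hp.2 a b, one_mul]
        _ = ∑ a : X, ∑ b : X, ∑ yA : Y, ∑ yB : Y, p yA yB a b * u a b :=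
            Finset.sum_congr rfl fun a _ => Finset.sum_congr rfl fun b _ => by
              rw [Finset.sum_mul]
              exact Finset.sum_congr rfl fun yA _ => by rw [Finset.sum_mul]
        _ = 0 := h1
    have hums : (∑ a : X, ∑ b : X, um a b) = s := by
      have : (∑ a : X, ∑ b : X, up a b) - (∑ a : X, ∑ b : X, um a b)
          = ∑ a : X, ∑ b : X, u a b := by
        rw [← Finset.sum_sub_distrib]
        refine Finset.sum_congr rfl fun a _ => ?_
        rw [← Finset.sum_sub_distrib]
        exact Finset.sum_congr rfl fun b _ => hdiff a b
      rw [hsum] at this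
      linarith [this]
    rcases eq_or_ne s 0 with hs0 | hs0
    · -- s = 0 forces u = 0
      have nz : ∀ (F : X → X → ℝ), (∀ a b, 0 ≤ F a b) →
          (∑ a : X, ∑ b : X, F a b) = 0 → ∀ a b, F a b = 0 := by
        intro F hF hsumF a b
        have h1 := (Finset.sum_eq_zero_iff_of_nonneg (fun a _ =>
          Finset.sum_nonneg fun b _ => hF a b)).mp hsumF a (Finset.mem_univ a)
        exact (Finset.sum_eq_zero_iff_of_nonneg (fun b _ => hF a b)).mp h1 b
          (Finset.mem_univ b)
      funext a b
      have e1 := nz up hup0 hs0 a b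
      have e2 := nz um hum0 (hums.trans hs0) a b
      have := hdiff a b
      show u a b = 0
      linarith
    · have hspos : 0 < s := lt_of_le_of_ne
        (Finset.sum_nonneg fun a _ => Finset.sum_nonneg fun b _ => hup0 a b)
        (Ne.symm hs0)
      set ν₁ : X → X → ℝ := fun a b => up a b / s with hν₁
      set ν₂ : X → X → ℝ := fun a b => um a b / s with hν₂
      have hν₁0 : ∀ a b, 0 ≤ ν₁ a b := fun a b => div_nonneg (hup0 a b) hspos.le
      have hν₂0 : ∀ a b, 0 ≤ ν₂ a b := fun a b => div_nonneg (hum0 a b) hspos.le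
      have hν₁1 : (∑ a : X, ∑ b : X, ν₁ a b) = 1 := by
        simp_rw [hν₁, ← Finset.sum_div]
        rw [← hs, div_self hs0]
      have hν₂1 : (∑ a : X, ∑ b : X, ν₂ a b) = 1 := by
        simp_rw [hν₂, ← Finset.sum_div]
        rw [hums, div_self hs0]
      have hddiff : ∀ a b, ν₁ a b = ν₂ a b + u a b / s := by
        intro a b
        rw [hν₁, hν₂]
        have := hdiff a b
        field_simp
        linarith
      -- key summation helpers
      have key2 : ∀ (F G D : X → X → ℝ), (∀ a b, F a b = G a b + D a b) →
          (∑ a : X, ∑ b : X, D a b) = 0 →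
          (∑ a : X, ∑ b : X, F a b) = ∑ a : X, ∑ b : X, G a b := by
        intro F G D hFG hD
        calc (∑ a : X, ∑ b : X, F a b)
            = ∑ a : X, ∑ b : X, (G a b + D a b) :=
              Finset.sum_congr rfl fun a _ => Finset.sum_congr rfl fun b _ => hFG a b
          _ = (∑ a : X, ∑ b : X, G a b) + ∑ a : X, ∑ b : X, D a b := by
              rw [← Finset.sum_add_distrib]
              exact Finset.sum_congr rfl fun a _ => Finset.sum_add_distrib
          _ = ∑ a : X, ∑ b : X, G a b := by rw [hD, add_zero]
      -- transposed nullspace property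
      have huT : ∀ zA zB, (∑ xA : X, ∑ xB : X, p zA zB xA xB * u xB xA) = 0 := by
        intro zA zB
        calc (∑ xA : X, ∑ xB : X, p zA zB xA xB * u xB xA)
            = ∑ xA : X, ∑ xB : X, p zB zA xB xA * u xB xA :=
              Finset.sum_congr rfl fun xA _ => Finset.sum_congr rfl fun xB _ => by
                rw [hsym zA zB xA xB]
          _ = ∑ xB : X, ∑ xA : X, p zB zA xB xA * u xB xA := Finset.sum_comm
          _ = 0 := hu zB zA
      have hD1 : ∀ zA zB, (∑ x : X, p zA zB x x * (∑ b : X, u x b)) = 0 := by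
        intro zA zB
        rcases eq_or_ne zA zB with rfl | hne
        · calc (∑ x : X, p zA zA x x * (∑ b : X, u x b))
              = ∑ x : X, ∑ b : X, p zA zA x x * u x b :=
                Finset.sum_congr rfl fun x _ => Finset.mul_sum _ _ _
            _ = ∑ x : X, ∑ b : X, ∑ yB : Y, p zA yB x b * u x b :=
                Finset.sum_congr rfl fun x _ => Finset.sum_congr rfl fun b _ => by
                  rw [← Finset.sum_mul, hmargA zA x b]
            _ = ∑ x : X, ∑ yB : Y, ∑ b : X, p zA yB x b * u x b :=
                Finset.sum_congr rfl fun x _ => Finset.sum_comm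
            _ = ∑ yB : Y, ∑ x : X, ∑ b : X, p zA yB x b * u x b := Finset.sum_comm
            _ = 0 := Finset.sum_eq_zero fun yB _ => hu zA yB
        · refine Finset.sum_eq_zero fun x _ => ?_
          rw [hps x zA zB hne, zero_mul]
      have hD2 : ∀ zA zB, (∑ x : X, p zA zB x x * (∑ a : X, u a x)) = 0 := by
        intro zA zB
        rcases eq_or_ne zA zB with rfl | hne
        · calc (∑ x : X, p zA zA x x * (∑ a : X, u a x))
              = ∑ x : X, ∑ a : X, p zA zA x x * u a x :=
                Finset.sum_congr rfl fun x _ => Finset.mul_sum _ _ _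
            _ = ∑ x : X, ∑ a : X, ∑ yA : Y, p yA zA a x * u a x :=
                Finset.sum_congr rfl fun x _ => Finset.sum_congr rfl fun a _ => by
                  rw [← Finset.sum_mul, hmargB zA a x]
            _ = ∑ x : X, ∑ yA : Y, ∑ a : X, p yA zA a x * u a x :=
                Finset.sum_congr rfl fun x _ => Finset.sum_comm
            _ = ∑ yA : Y, ∑ x : X, ∑ a : X, p yA zA a x * u a x := Finset.sum_comm
            _ = ∑ yA : Y, ∑ a : X, ∑ x : X, p yA zA a x * u a x :=
                Finset.sum_congr rfl fun yA _ => Finset.sum_comm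
            _ = 0 := Finset.sum_eq_zero fun yA _ => hu yA zA
        · refine Finset.sum_eq_zero fun x _ => ?_
          rw [hps x zA zB hne, zero_mul]
      have key1 : ∀ (F G D : X → ℝ), (∀ x, F x = G x + D x) →
          (∑ x : X, D x) = 0 → (∑ x : X, F x) = ∑ x : X, G x := by
        intro F G D hFG hD
        calc (∑ x : X, F x) = ∑ x : X, (G x + D x) :=
              Finset.sum_congr rfl fun x _ => hFG x
          _ = (∑ x : X, G x) + ∑ x : X, D x := Finset.sum_add_distrib
          _ = ∑ x : X, G x := by rw [hD, add_zero]
      have hcomp : Comp p (Qcorr ν₁) = Comp p (Qcorr ν₂) := by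
        funext zA zB uA uB
        show (∑ xA : X, ∑ xB : X, p zA zB xA xB * Qcorr ν₁ xA xB uA uB)
            = ∑ xA : X, ∑ xB : X, p zA zB xA xB * Qcorr ν₂ xA xB uA uB
        have collapseA : ∀ (ν : X → X → ℝ),
            (∑ xA : X, ∑ xB : X, p zA zB xA xB *
              (if xA = xB then ∑ x₂ : X, ν xA x₂ else 0))
            = ∑ x : X, p zA zB x x * (∑ x₂ : X, ν x x₂) := by
          intro ν
          refine Finset.sum_congr rfl fun xA _ => ?_
          simp [mul_ite, mul_zero, Finset.sum_ite_eq]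
        have collapseB : ∀ (ν : X → X → ℝ),
            (∑ xA : X, ∑ xB : X, p zA zB xA xB *
              (if xA = xB then ∑ x₁ : X, ν x₁ xA else 0))
            = ∑ x : X, p zA zB x x * (∑ x₁ : X, ν x₁ x) := by
          intro ν
          refine Finset.sum_congr rfl fun xA _ => ?_
          simp [mul_ite, mul_zero, Finset.sum_ite_eq]
        fin_cases uA <;> fin_cases uB <;> simp only [Fin.zero_eta, Fin.mk_one]
        · -- (0,0)
          simp only [Qcorr_00]
          rw [collapseA ν₁, collapseA ν₂]
          refine key1 _ _ (fun x => p zA zB x x * ((∑ b : X, u x b) / s))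
            (fun x => ?_) ?_
          · rw [← mul_add]
            congr 1
            rw [Finset.sum_div, ← Finset.sum_add_distrib]
            exact Finset.sum_congr rfl fun x₂ _ => hddiff x x₂
          · calc (∑ x : X, p zA zB x x * ((∑ b : X, u x b) / s))
                = ∑ x : X, (p zA zB x x * (∑ b : X, u x b)) / s :=
                  Finset.sum_congr rfl fun x _ => by ring
              _ = (∑ x : X, p zA zB x x * (∑ b : X, u x b)) / s :=
                  (Finset.sum_div _ _ _).symm
              _ = 0 := by rw [hD1 zA zB, zero_div]
        · -- (0,1)
          simp only [Qcorr_01]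
          refine key2 _ _ (fun a b => p zA zB a b * (u a b / s))
            (fun a b => by rw [hddiff a b]; ring) ?_
          calc (∑ a : X, ∑ b : X, p zA zB a b * (u a b / s))
              = ∑ a : X, ∑ b : X, (p zA zB a b * u a b) / s :=
                Finset.sum_congr rfl fun a _ => Finset.sum_congr rfl fun b _ => by ring
            _ = (∑ a : X, ∑ b : X, p zA zB a b * u a b) / s := by
                rw [Finset.sum_div]
                exact Finset.sum_congr rfl fun a _ => (Finset.sum_div _ _ _).symm
            _ = 0 := by rw [hu zA zB, zero_div]
        · -- (1,0)
          simp only [Qcorr_10]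
          refine key2 _ _ (fun a b => p zA zB a b * (u b a / s))
            (fun a b => by rw [hddiff b a]; ring) ?_
          calc (∑ a : X, ∑ b : X, p zA zB a b * (u b a / s))
              = ∑ a : X, ∑ b : X, (p zA zB a b * u b a) / s :=
                Finset.sum_congr rfl fun a _ => Finset.sum_congr rfl fun b _ => by ring
            _ = (∑ a : X, ∑ b : X, p zA zB a b * u b a) / s := by
                rw [Finset.sum_div]
                exact Finset.sum_congr rfl fun a _ => (Finset.sum_div _ _ _).symm
            _ = 0 := by rw [huT zA zB, zero_div]
        · -- (1,1)
          simp only [Qcorr_11]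
          rw [collapseB ν₁, collapseB ν₂]
          refine key1 _ _ (fun x => p zA zB x x * ((∑ a : X, u a x) / s))
            (fun x => ?_) ?_
          · rw [← mul_add]
            congr 1
            rw [Finset.sum_div, ← Finset.sum_add_distrib]
            exact Finset.sum_congr rfl fun x₁ _ => hddiff x₁ x
          · calc (∑ x : X, p zA zB x x * ((∑ a : X, u a x) / s))
                = ∑ x : X, (p zA zB x x * (∑ a : X, u a x)) / s :=
                  Finset.sum_congr rfl fun x _ => by ring
              _ = (∑ x : X, p zA zB x x * (∑ a : X, u a x)) / s :=
                  (Finset.sum_div _ _ _).symm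
              _ = 0 := by rw [hD2 zA zB, zero_div]
      have hq := h (Fin 2) (Qcorr ν₁) (Qcorr ν₂)
        (Qcorr_corr ν₁ hν₁0 hν₁1) (Qcorr_sync ν₁) (Qcorr_classical ν₁ hν₁0 hν₁1)
        (Qcorr_corr ν₂ hν₂0 hν₂1) (Qcorr_sync ν₂) (Qcorr_classical ν₂ hν₂0 hν₂1)
        hcomp
      funext a b
      have e := congrFun (congrFun (congrFun (congrFun hq a) b) 0) 1
      rw [Qcorr_01, Qcorr_01] at e
      have e2 : up a b = um a b := by
        simp only [hν₁, hν₂] at e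
        field_simp at e
        exact e
      have := hdiff a b
      show u a b = 0
      linarith
  · -- zero right nullspace implies mono
    intro hnull U _ q₁ q₂ _ _ _ _ _ _ hcomp
    funext xA xB uA uB
    set w : X → X → ℝ := fun a b => q₁ a b uA uB - q₂ a b uA uB with hw
    have hwnull : ∀ yA yB, (∑ a : X, ∑ b : X, p yA yB a b * w a b) = 0 := by
      intro yA yB
      have hc := congrFun (congrFun (congrFun (congrFun hcomp yA) yB) uA) uB
      simp only [Comp] at hc
      calc (∑ a : X, ∑ b : X, p yA yB a b * w a b)
          = (∑ a : X, ∑ b : X, p yA yB a b * q₁ a b uA uB)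
            - ∑ a : X, ∑ b : X, p yA yB a b * q₂ a b uA uB := by
            rw [← Finset.sum_sub_distrib]
            refine Finset.sum_congr rfl fun a _ => ?_
            rw [← Finset.sum_sub_distrib]
            exact Finset.sum_congr rfl fun b _ => by rw [hw]; ring
        _ = 0 := by rw [hc]; ring
    have := hnull w hwnull
    have e := congrFun (congrFun this xA) xB
    simp only [hw, Pi.zero_apply] at e
    linarith [e]
end

section
/- A synchronous nonsignaling correlation p from a finite set X to a finite set Y is a monomorphism in the category whose morphisms are synchronous nonsignaling correlations (i.e., for every finite set U and every pair of synchronous nonsignaling correlations q_1, q_2 from U to X, p ∘ q_1 = p ∘ q_2 implies q_1 = q_2) if and only if the stochastic matrix of p has zero right nullspace. -/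
/-!
If `u` is in the right nullspace of `p`, then `∑ u = 0` and, for synchronous nonsignaling `p`, so
are the diagonal matrices of the row and column sums of `u`. From these one builds a synchronous,
nonsignaling, zero-sum perturbation `d` from `Bool` to `X` with `u` as one of its blocks and all
its blocks in the nullspace. Adding `ε • d` to a correlation that is positive wherever
synchronicity allows gives two distinct morphisms equalized by `p` unless `u = 0`. The converse
is linearity of composition.
-/

open Finset Matrix Kronecker
open scoped ComplexOrder

section

variable {X Y U : Type*}

def InRightNullspace [Fintype X] (p : Y → Y → X → X → ℝ) (u : X → X → ℝ) : Prop :=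
  ∀ yA yB, ∑ xA, ∑ xB, p yA yB xA xB * u xA xB = 0

section Nullspace

variable [Fintype X] {p : Y → Y → X → X → ℝ}

theorem comp_left_injective (hp : ∀ u, InRightNullspace p u → u = 0)
    {q₁ q₂ : X → X → U → U → ℝ} (h : Comp p q₁ = Comp p q₂) : q₁ = q₂ := by
  funext xA xB uA uB
  have hnull : InRightNullspace p (fun xA xB => q₁ xA xB uA uB - q₂ xA xB uA uB) := fun yA yB => by
    simpa only [Comp, mul_sub, sum_sub_distrib, sub_eq_zero] using
      congr_fun₂ (congr_fun₂ h yA yB) uA uB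
  exact sub_eq_zero.mp (congr_fun₂ (hp _ hnull) xA xB)

theorem comp_add_mul_eq_comp (q d : X → X → U → U → ℝ) (ε : ℝ)
    (hd : ∀ uA uB, InRightNullspace p fun xA xB => d xA xB uA uB) :
    Comp p (fun xA xB uA uB => q xA xB uA uB + ε * d xA xB uA uB) = Comp p q := by
  funext yA yB uA uB
  simp only [Comp, mul_add, sum_add_distrib, mul_left_comm _ ε, ← mul_sum, hd uA uB yA yB,
    mul_zero, add_zero]

theorem InRightNullspace.sum_sum_eq_zero [Fintype Y] {u : X → X → ℝ} (hp : IsCorrelation p)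
    (hu : InRightNullspace p u) : ∑ xA, ∑ xB, u xA xB = 0 := by
  calc ∑ xA, ∑ xB, u xA xB = ∑ xA, ∑ xB, (∑ yA, ∑ yB, p yA yB xA xB) * u xA xB := by
        simp only [hp.2, one_mul]
    _ = ∑ yA, ∑ yB, ∑ xA, ∑ xB, p yA yB xA xB * u xA xB := by
        simp_rw [sum_mul, sum_comm (s := (univ : Finset X)) (t := (univ : Finset Y))]
    _ = 0 := sum_eq_zero fun yA _ => sum_eq_zero fun yB _ => hu yA yB

theorem inRightNullspace_diagonal [DecidableEq X] (hps : IsSynchronous p) {c : X → ℝ}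
    (hc : ∀ y, ∑ x, p y y x x * c x = 0) : InRightNullspace p (diagonal c) := by
  intro yA yB
  simp only [diagonal_apply, mul_ite, mul_zero, sum_ite_eq, mem_univ, if_true]
  rcases eq_or_ne yA yB with rfl | hy
  · exact hc yA
  · simp [hps _ _ _ hy]

end Nullspace

section Marginals

variable [Fintype Y] {p : Y → Y → X → X → ℝ}

theorem IsNonsignaling.sum_snd_eq_diag (hps : IsSynchronous p) (hpn : IsNonsignaling p)
    (y : Y) (xA xB : X) : ∑ yB, p y yB xA xB = p y y xA xA := by
  rw [hpn.1 y xA xB xA, sum_eq_single y fun yB _ hyB => hps xA y yB (Ne.symm hyB)]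
  simp

theorem IsNonsignaling.sum_fst_eq_diag (hps : IsSynchronous p) (hpn : IsNonsignaling p)
    (y : Y) (xA xB : X) : ∑ yA, p yA y xA xB = p y y xB xB := by
  rw [hpn.2 y xA xB xB, sum_eq_single y fun yA _ hyA => hps xB yA y hyA]
  simp

variable [Fintype X] {u : X → X → ℝ}

theorem InRightNullspace.sum_diag_mul_sum_snd (hps : IsSynchronous p) (hpn : IsNonsignaling p)
    (hu : InRightNullspace p u) (y : Y) : ∑ x, p y y x x * ∑ x', u x x' = 0 := by
  have h := sum_eq_zero (s := univ) fun yB _ => hu y yB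
  simp_rw [sum_comm (s := (univ : Finset Y)) (t := (univ : Finset X)), ← sum_mul,
    hpn.sum_snd_eq_diag hps] at h
  simpa only [mul_sum] using h

theorem InRightNullspace.sum_diag_mul_sum_fst (hps : IsSynchronous p) (hpn : IsNonsignaling p)
    (hu : InRightNullspace p u) (y : Y) : ∑ x, p y y x x * ∑ x', u x' x = 0 := by
  have h := sum_eq_zero (s := univ) fun yA _ => hu yA y
  simp_rw [sum_comm (s := (univ : Finset Y)) (t := (univ : Finset X)), ← sum_mul,
    hpn.sum_fst_eq_diag hps] at h
  rw [sum_comm] at h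
  simpa only [mul_sum] using h

end Marginals

section Perturbation

variable {q d : X → X → U → U → ℝ}

theorem IsSynchronous.add_mul (hq : IsSynchronous q) (hd : IsSynchronous d) (ε : ℝ) :
    IsSynchronous fun xA xB uA uB => q xA xB uA uB + ε * d xA xB uA uB := by
  intro u a b hab
  simp only [hq u a b hab, hd u a b hab, mul_zero, add_zero]

variable [Fintype X]

theorem IsNonsignaling.add_mul (hq : IsNonsignaling q) (hd : IsNonsignaling d) (ε : ℝ) :
    IsNonsignaling fun xA xB uA uB => q xA xB uA uB + ε * d xA xB uA uB := by
  constructor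
  · intro a uA uB uB'
    simp only [sum_add_distrib, ← mul_sum, hq.1 a uA uB uB', hd.1 a uA uB uB']
  · intro b uA uA' uB
    simp only [sum_add_distrib, ← mul_sum, hq.2 b uA uA' uB, hd.2 b uA uA' uB]

theorem IsCorrelation.add_mul [Fintype U] (hq : IsCorrelation q)
    (hd : ∀ uA uB, ∑ xA, ∑ xB, d xA xB uA uB = 0) {ε : ℝ}
    (hnonneg : ∀ xA xB uA uB, 0 ≤ q xA xB uA uB + ε * d xA xB uA uB) :
    IsCorrelation fun xA xB uA uB => q xA xB uA uB + ε * d xA xB uA uB := by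
  refine ⟨hnonneg, fun uA uB => ?_⟩
  simp only [sum_add_distrib, ← mul_sum, hq.2 uA uB, hd uA uB, mul_zero, add_zero]

end Perturbation

theorem exists_pos_add_mul_nonneg {ι : Type*} [Finite ι] {f g : ι → ℝ} (hf : 0 ≤ f)
    (hfg : ∀ i, f i = 0 → g i = 0) : ∃ ε > 0, ∀ i, 0 ≤ f i + ε * g i := by
  have hev : ∀ i, ∀ᶠ ε in nhdsWithin (0 : ℝ) (Set.Ioi 0), 0 ≤ f i + ε * g i := by
    intro i
    rcases (hf i).eq_or_lt with h | h
    · simp [← h, hfg i h.symm]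
    · have : ∀ᶠ ε in nhds (0 : ℝ), 0 < f i + ε * g i :=
        continuousAt_const.eventually_lt
          (continuous_const.add (continuous_id.mul continuous_const)).continuousAt (by simpa using h)
      exact (eventually_nhdsWithin_of_eventually_nhds this).mono fun _ h => h.le
  obtain ⟨ε, hε, hfg⟩ := ((Filter.eventually_all.2 hev).and self_mem_nhdsWithin).exists
  exact ⟨ε, hfg, hε⟩

section Construction

variable [Fintype X] [DecidableEq X]

/-- The `(false, true)` block is `u` itself; the diagonal corrections in the other blocks make the
row sums depend only on the first input and the column sums only on the second, and they stay in
the right nullspace because a synchronous nonsignaling `p` has marginals `p y y x x`. -/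
def nullPerturbation (u : X → X → ℝ) : X → X → Bool → Bool → ℝ
  | a, b, false, false => diagonal (fun x => ∑ x', u x x') a b
  | a, b, false, true => u a b
  | a, b, true, false => diagonal (fun x => ∑ x', u x x' + ∑ x', u x' x) a b - u a b
  | a, b, true, true => diagonal (fun x => ∑ x', u x' x) a b

section

variable (u : X → X → ℝ)

theorem isSynchronous_nullPerturbation : IsSynchronous (nullPerturbation u) := by
  rintro (_ | _) a b hab <;> simp [nullPerturbation, hab]

theorem sum_nullPerturbation_snd (a : X) (i j : Bool) :
    ∑ b, nullPerturbation u a b i j = cond i (∑ x, u x a) (∑ x, u a x) := by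
  cases i <;> cases j <;> simp [nullPerturbation, diagonal_apply, sum_sub_distrib]

theorem sum_nullPerturbation_fst (b : X) (i j : Bool) :
    ∑ a, nullPerturbation u a b i j = cond j (∑ x, u x b) (∑ x, u b x) := by
  cases i <;> cases j <;> simp [nullPerturbation, diagonal_apply, sum_sub_distrib]

theorem isNonsignaling_nullPerturbation : IsNonsignaling (nullPerturbation u) :=
  ⟨fun a i j j' => by simp only [sum_nullPerturbation_snd],
    fun b i i' j => by simp only [sum_nullPerturbation_fst]⟩

theorem sum_sum_nullPerturbation (hu : ∑ a, ∑ b, u a b = 0) (i j : Bool) :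
    ∑ a, ∑ b, nullPerturbation u a b i j = 0 := by
  cases i
  · simpa only [sum_nullPerturbation_snd, cond_false] using hu
  · simp only [sum_nullPerturbation_snd, cond_true]
    rwa [sum_comm]

end

theorem InRightNullspace.nullPerturbation [Fintype Y] {p : Y → Y → X → X → ℝ}
    (hps : IsSynchronous p) (hpn : IsNonsignaling p) {u : X → X → ℝ} (hu : InRightNullspace p u)
    (i j : Bool) : InRightNullspace p fun a b => nullPerturbation u a b i j := by
  have hrow := inRightNullspace_diagonal hps (hu.sum_diag_mul_sum_snd hps hpn)
  have hcol := inRightNullspace_diagonal hps (hu.sum_diag_mul_sum_fst hps hpn)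
  cases i <;> cases j
  · exact hrow
  · exact hu
  · have hsum := inRightNullspace_diagonal hps (c := fun x => ∑ x', u x x' + ∑ x', u x' x)
      fun y => by
        simp only [mul_add, sum_add_distrib, hu.sum_diag_mul_sum_snd hps hpn,
          hu.sum_diag_mul_sum_fst hps hpn, add_zero]
    intro yA yB
    simp only [_root_.nullPerturbation, mul_sub, sum_sub_distrib, hsum yA yB, hu yA yB, sub_zero]
  · exact hcol

end Construction

section Uniform

variable (X U) [Fintype X] [DecidableEq X] [DecidableEq U]

/-- Equal inputs give equal uniform outputs, distinct inputs give independent uniform outputs. This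
vanishes only where synchronicity forces it to, so it absorbs small synchronous perturbations. -/
noncomputable def uniformSyncCorr : X → X → U → U → ℝ := fun a b i j =>
  if i = j then diagonal (fun _ => (Fintype.card X : ℝ)⁻¹) a b else ((Fintype.card X : ℝ) ^ 2)⁻¹

theorem sum_uniformSyncCorr_snd [Nonempty X] (a : X) (i j : U) :
    ∑ b, uniformSyncCorr X U a b i j = (Fintype.card X : ℝ)⁻¹ := by
  unfold uniformSyncCorr
  split_ifs
  · simp [diagonal_apply]
  · simp [sq]

theorem sum_uniformSyncCorr_fst [Nonempty X] (b : X) (i j : U) :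
    ∑ a, uniformSyncCorr X U a b i j = (Fintype.card X : ℝ)⁻¹ := by
  unfold uniformSyncCorr
  split_ifs
  · simp [diagonal_apply]
  · simp [sq]

theorem isCorrelation_uniformSyncCorr [Fintype U] [Nonempty X] :
    IsCorrelation (uniformSyncCorr X U) := by
  refine ⟨fun a b i j => ?_, fun i j => ?_⟩
  · simp only [uniformSyncCorr, diagonal_apply]
    split_ifs <;> positivity
  · simp [sum_uniformSyncCorr_snd, Fintype.card_ne_zero]

theorem isSynchronous_uniformSyncCorr : IsSynchronous (uniformSyncCorr X U) := by
  intro i a b hab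
  simp [uniformSyncCorr, hab]

theorem isNonsignaling_uniformSyncCorr [Nonempty X] : IsNonsignaling (uniformSyncCorr X U) :=
  ⟨fun a i j j' => by simp only [sum_uniformSyncCorr_snd],
    fun b i i' j => by simp only [sum_uniformSyncCorr_fst]⟩

variable {X U}

theorem IsSynchronous.eq_zero_of_uniformSyncCorr_eq_zero [Nonempty X] {d : X → X → U → U → ℝ}
    (hd : IsSynchronous d) {a b : X} {i j : U} (h : uniformSyncCorr X U a b i j = 0) :
    d a b i j = 0 := by
  unfold uniformSyncCorr at h
  split_ifs at h with hij
  · subst hij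
    exact hd i a b fun hab => by simp [hab] at h
  · simp at h

theorem IsSynchronous.exists_pos_uniformSyncCorr_add_mul_nonneg [Fintype U] [Nonempty X]
    {d : X → X → U → U → ℝ} (hd : IsSynchronous d) :
    ∃ ε > 0, ∀ a b i j, 0 ≤ uniformSyncCorr X U a b i j + ε * d a b i j := by
  obtain ⟨ε, hε, h⟩ := exists_pos_add_mul_nonneg
    (f := fun k : X × X × U × U => uniformSyncCorr X U k.1 k.2.1 k.2.2.1 k.2.2.2)
    (g := fun k => d k.1 k.2.1 k.2.2.1 k.2.2.2)
    (fun _ => (isCorrelation_uniformSyncCorr X U).1 _ _ _ _)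
    (fun _ => hd.eq_zero_of_uniformSyncCorr_eq_zero)
  exact ⟨ε, hε, fun a b i j => h (a, b, i, j)⟩

end Uniform

end

/-- In the category of synchronous nonsignaling correlations, monomorphisms are precisely
the correlations whose stochastic matrix has zero right nullspace. -/
theorem nonsignaling_mono_iff_zero_right_nullspace {X Y : Type*} [Fintype X] [Fintype Y]
    (p : Y → Y → X → X → ℝ)
    (hp : IsCorrelation p) (hps : IsSynchronous p) (hpn : IsNonsignaling p) :
    (∀ (U : Type) [Fintype U] (q₁ q₂ : X → X → U → U → ℝ),
      IsCorrelation q₁ → IsSynchronous q₁ → IsNonsignaling q₁ →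
      IsCorrelation q₂ → IsSynchronous q₂ → IsNonsignaling q₂ →
      Comp p q₁ = Comp p q₂ → q₁ = q₂) ↔
    (∀ u : X → X → ℝ,
      (∀ yA yB, (∑ xA : X, ∑ xB : X, p yA yB xA xB * u xA xB) = 0) → u = 0) := by
  refine ⟨fun hmono u hu => ?_, fun h U _ q₁ q₂ _ _ _ _ _ _ => comp_left_injective h⟩
  rcases isEmpty_or_nonempty X with _ | _
  · exact Subsingleton.elim _ _
  classical
  have hd := isSynchronous_nullPerturbation u
  obtain ⟨ε, hε, hnonneg⟩ := hd.exists_pos_uniformSyncCorr_add_mul_nonneg (U := Bool)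
  have hq₁ := (isCorrelation_uniformSyncCorr X Bool).add_mul
    (sum_sum_nullPerturbation u (InRightNullspace.sum_sum_eq_zero hp hu)) hnonneg
  have hq := hmono Bool _ _ hq₁
    ((isSynchronous_uniformSyncCorr X Bool).add_mul hd ε)
    ((isNonsignaling_uniformSyncCorr X Bool).add_mul (isNonsignaling_nullPerturbation u) ε)
    (isCorrelation_uniformSyncCorr X Bool) (isSynchronous_uniformSyncCorr X Bool)
    (isNonsignaling_uniformSyncCorr X Bool)
    (comp_add_mul_eq_comp _ _ ε (InRightNullspace.nullPerturbation hps hpn hu))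
  funext a b
  simpa [nullPerturbation, hε.ne'] using congr_fun₂ (congr_fun₂ hq a b) false true
end

section
/- A synchronous correlation p from a finite set X to a finite set Y is an epimorphism (i.e., for every finite set Z and every pair of synchronous correlations q_1, q_2 from Y to Z, q_1 ∘ p = q_2 ∘ p implies q_1 = q_2) if and only if the stochastic matrix of p has zero left nullspace. -/
open Finset Matrix Kronecker
open scoped ComplexOrder

/-- In the category of synchronous correlations, epimorphisms are precisely the
correlations whose stochastic matrix has zero left nullspace. -/
theorem epi_iff_zero_left_nullspace {X Y : Type*} [Fintype X] [Fintype Y]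
    (p : Y → Y → X → X → ℝ) (hp : IsCorrelation p) (hps : IsSynchronous p) :
    (∀ (Z : Type) [Fintype Z] (q₁ q₂ : Z → Z → Y → Y → ℝ),
      IsCorrelation q₁ → IsSynchronous q₁ →
      IsCorrelation q₂ → IsSynchronous q₂ →
      Comp q₁ p = Comp q₂ p → q₁ = q₂) ↔
    (∀ w : Y → Y → ℝ,
      (∀ xA xB, (∑ yA : Y, ∑ yB : Y, w yA yB * p yA yB xA xB) = 0) → w = 0) := by
  constructor
  · intro hepi w hw
    by_cases hC : (∑ yA : Y, ∑ yB : Y, |w yA yB|) = 0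
    · funext yA yB
      have h1 : ∀ yA ∈ Finset.univ, (∑ yB : Y, |w yA yB|) = 0 := by
        intro yA _
        have := (Finset.sum_eq_zero_iff_of_nonneg (fun i _ => by positivity)).mp hC
        exact this yA (Finset.mem_univ _)
      have h2 := (Finset.sum_eq_zero_iff_of_nonneg (fun i _ => abs_nonneg _)).mp
        (h1 yA (Finset.mem_univ _)) yB (Finset.mem_univ _)
      simpa [abs_eq_zero] using h2
    · set C := ∑ yA : Y, ∑ yB : Y, |w yA yB| with hCdef
      have hCnn : 0 ≤ C := Finset.sum_nonneg fun _ _ => Finset.sum_nonneg fun _ _ => abs_nonneg _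
      have hCpos : 0 < C := lt_of_le_of_ne hCnn (Ne.symm hC)
      set ε : ℝ := 1 / (2 * C) with hεdef
      have hεpos : 0 < ε := by positivity
      have hwle : ∀ yA yB, |w yA yB| ≤ C := by
        intro yA yB
        have h1 : |w yA yB| ≤ ∑ b : Y, |w yA b| :=
          Finset.single_le_sum (f := fun b => |w yA b|)
            (fun i _ => abs_nonneg _) (Finset.mem_univ yB)
        have h2 : (∑ b : Y, |w yA b|) ≤ C :=
          Finset.single_le_sum (f := fun a => ∑ b : Y, |w a b|)
            (fun i _ => Finset.sum_nonneg fun _ _ => abs_nonneg _) (Finset.mem_univ yA)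
        linarith
      have hεC : ε * C = 1 / 2 := by
        rw [hεdef]; field_simp
      have hbound : ∀ yA yB, ε * |w yA yB| ≤ 1 / 2 := by
        intro yA yB
        have : ε * |w yA yB| ≤ ε * C := by nlinarith [hwle yA yB, hεpos.le]
        linarith
      -- the two correlations
      set c : Bool → ℝ := fun zA => if zA then ε else -ε with hcdef
      have hcabs : ∀ zA, |c zA| = ε := by
        intro zA; cases zA <;> simp [hcdef, abs_of_pos hεpos, abs_of_neg (neg_neg_iff_pos.mpr hεpos)]
      set q₁ : Bool → Bool → Y → Y → ℝ :=
        fun zA zB yA yB => if zA = zB then 1 / 2 + c zA * w yA yB else 0 with hq₁def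
      set q₂ : Bool → Bool → Y → Y → ℝ :=
        fun zA zB _ _ => if zA = zB then 1 / 2 else 0 with hq₂def
      have habs : ∀ zA yA yB, |c zA * w yA yB| ≤ 1 / 2 := by
        intro zA yA yB
        rw [abs_mul, hcabs]; exact hbound yA yB
      have hcorr₁ : IsCorrelation q₁ := by
        constructor
        · intro zA zB yA yB
          by_cases h : zA = zB
          · simp only [hq₁def, if_pos h]
            have := neg_abs_le (c zA * w yA yB)
            have h2 := habs zA yA yB
            linarith
          · simp [hq₁def, if_neg h]
        · intro yA yB
          rw [Fintype.sum_bool]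
          rw [Fintype.sum_bool, Fintype.sum_bool]
          simp only [hq₁def, hcdef]
          norm_num
          ring
      have hsync₁ : IsSynchronous q₁ := by
        intro y zA zB hne
        simp [hq₁def, if_neg hne]
      have hcorr₂ : IsCorrelation q₂ := by
        constructor
        · intro zA zB yA yB
          by_cases h : zA = zB <;> simp [hq₂def, h]
        · intro yA yB
          rw [Fintype.sum_bool, Fintype.sum_bool, Fintype.sum_bool]
          simp [hq₂def]
          norm_num
      have hsync₂ : IsSynchronous q₂ := by
        intro y zA zB hne
        simp [hq₂def, if_neg hne]
      have hcomp : Comp q₁ p = Comp q₂ p := by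
        funext zA zB xA xB
        simp only [Comp]
        by_cases h : zA = zB
        · simp only [hq₁def, hq₂def, if_pos h]
          have key : ∀ yA yB : Y, (1 / 2 + c zA * w yA yB) * p yA yB xA xB =
              1 / 2 * p yA yB xA xB + c zA * (w yA yB * p yA yB xA xB) := by
            intro yA yB; ring
          simp_rw [key, Finset.sum_add_distrib, ← Finset.mul_sum, hw xA xB, mul_zero, add_zero]
        · simp [hq₁def, hq₂def, if_neg h]
      have heq := hepi Bool q₁ q₂ hcorr₁ hsync₁ hcorr₂ hsync₂ hcomp
      funext yA yB
      have h1 : q₁ true true yA yB = q₂ true true yA yB := by rw [heq]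
      simp only [hq₁def, hq₂def, hcdef, if_pos rfl, if_true] at h1
      have : ε * w yA yB = 0 := by linarith
      have := mul_eq_zero.mp this
      rcases this with h | h
      · exact absurd h (ne_of_gt hεpos)
      · exact h
  · intro hnull Z _ q₁ q₂ _ _ _ _ hcomp
    funext zA zB yA yB
    have hw : ∀ xA xB,
        (∑ yA : Y, ∑ yB : Y, (q₁ zA zB yA yB - q₂ zA zB yA yB) * p yA yB xA xB) = 0 := by
      intro xA xB
      have h1 : Comp q₁ p zA zB xA xB = Comp q₂ p zA zB xA xB := by rw [hcomp]
      simp only [Comp] at h1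
      simp_rw [sub_mul, Finset.sum_sub_distrib]
      linarith
    have := hnull (fun yA yB => q₁ zA zB yA yB - q₂ zA zB yA yB) hw
    have h2 := congrFun (congrFun this yA) yB
    simp only [Pi.zero_apply] at h2
    linarith
end

section
/- A synchronous nonsignaling correlation p from a finite set X to a finite set Y is an epimorphism in the category whose morphisms are synchronous nonsignaling correlations (i.e., for every finite set Z and every pair of synchronous nonsignaling correlations q_1, q_2 from Y to Z, q_1 ∘ p = q_2 ∘ p implies q_1 = q_2) if and only if the stochastic matrix of p has zero left nullspace. -/
open Finset Matrix Kronecker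
open scoped ComplexOrder

/-- Column-constant vectors built from a diagonal-orthogonal function lie in the nullspace. -/
theorem colconst_null {X Y : Type*} [Fintype X] [Fintype Y]
    {p : Y → Y → X → X → ℝ} (hps : IsSynchronous p) (hpn : IsNonsignaling p)
    (d : Y → ℝ) (hd : ∀ x : X, (∑ y : Y, d y * p y y x x) = 0)
    (xA xB : X) : (∑ yA : Y, ∑ yB : Y, d yA * p yA yB xA xB) = 0 := by
  have h1 : ∀ yA, (∑ yB : Y, d yA * p yA yB xA xB) = d yA * p yA yA xA xA := by
    intro yA
    rw [← Finset.mul_sum, hpn.1 yA xA xB xA, Finset.sum_eq_single yA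
      (fun yB _ hne => hps xA yA yB (Ne.symm hne)) (fun h => absurd (Finset.mem_univ yA) h)]
  rw [Finset.sum_congr rfl fun yA _ => h1 yA, hd xA]

theorem rowconst_null {X Y : Type*} [Fintype X] [Fintype Y]
    {p : Y → Y → X → X → ℝ} (hps : IsSynchronous p) (hpn : IsNonsignaling p)
    (d : Y → ℝ) (hd : ∀ x : X, (∑ y : Y, d y * p y y x x) = 0)
    (xA xB : X) : (∑ yA : Y, ∑ yB : Y, d yB * p yA yB xA xB) = 0 := by
  rw [Finset.sum_comm]
  have h1 : ∀ yB, (∑ yA : Y, d yB * p yA yB xA xB) = d yB * p yB yB xB xB := by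
    intro yB
    rw [← Finset.mul_sum, hpn.2 yB xA xB xB, Finset.sum_eq_single yB
      (fun yA _ hne => hps xB yA yB hne) (fun h => absurd (Finset.mem_univ yB) h)]
  rw [Finset.sum_congr rfl fun yB _ => h1 yB, hd xB]

noncomputable def pertCorr {Y : Type*} [DecidableEq Y] (u : Y → Y → ℝ) (e : ℝ) :
    Fin 2 → Fin 2 → Y → Y → ℝ :=
  fun zA zB yA yB =>
    (if yA = yB then (if zA = zB then (1:ℝ)/2 else 0) else 1/4) +
    ((if zA = 0 then (1:ℝ) else -1) * (if zB = 0 then (1:ℝ) else -1)) * e * u yA yB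

theorem pertCorr_isCorrelation {Y : Type*} [Fintype Y] [DecidableEq Y]
    {u : Y → Y → ℝ} {e : ℝ} (hdiag : ∀ y, u y y = 0)
    (hbound : ∀ yA yB, |e * u yA yB| ≤ 1/4) :
    IsCorrelation (pertCorr u e) := by
  constructor
  · intro zA zB yA yB
    by_cases h : yA = yB
    · subst h
      simp only [pertCorr, if_pos rfl, hdiag, mul_zero, add_zero]
      split <;> (try split) <;> norm_num
    · have hb := hbound yA yB
      have h1 : -(1/4 : ℝ) ≤ e * u yA yB := neg_le_of_abs_le hb
      have h2 : e * u yA yB ≤ 1/4 := le_of_abs_le hb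
      simp only [pertCorr, if_neg h]
      fin_cases zA <;> fin_cases zB <;> simp <;> nlinarith
  · intro yA yB
    by_cases h : yA = yB <;>
      simp [pertCorr, Fin.sum_univ_two, h] <;> ring

theorem pertCorr_isSynchronous {Y : Type*} [DecidableEq Y]
    {u : Y → Y → ℝ} (hdiag : ∀ y, u y y = 0) (e : ℝ) :
    IsSynchronous (pertCorr u e) := by
  intro y zA zB hz
  simp [pertCorr, hz, hdiag y]

theorem pertCorr_marg1 {Y : Type*} [DecidableEq Y]
    (u : Y → Y → ℝ) (e : ℝ) (zA : Fin 2) (yA yB : Y) :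
    (∑ zB : Fin 2, pertCorr u e zA zB yA yB) = 1/2 := by
  fin_cases zA <;> by_cases h : yA = yB <;>
    simp [pertCorr, Fin.sum_univ_two, h] <;> ring

theorem pertCorr_marg2 {Y : Type*} [DecidableEq Y]
    (u : Y → Y → ℝ) (e : ℝ) (zB : Fin 2) (yA yB : Y) :
    (∑ zA : Fin 2, pertCorr u e zA zB yA yB) = 1/2 := by
  fin_cases zB <;> by_cases h : yA = yB <;>
    simp [pertCorr, Fin.sum_univ_two, h] <;> ring

theorem pertCorr_isNonsignaling {Y : Type*} [Fintype Y] [DecidableEq Y]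
    (u : Y → Y → ℝ) (e : ℝ) :
    IsNonsignaling (pertCorr u e) :=
  ⟨fun zA yA yB yB' => by rw [pertCorr_marg1, pertCorr_marg1],
   fun zB yA yA' yB => by rw [pertCorr_marg2, pertCorr_marg2]⟩

theorem pertCorr_comp_eq {X Y : Type*} [Fintype X] [Fintype Y] [DecidableEq Y]
    {p : Y → Y → X → X → ℝ} {u : Y → Y → ℝ}
    (hnull : ∀ xA xB, (∑ yA : Y, ∑ yB : Y, u yA yB * p yA yB xA xB) = 0)
    (e e' : ℝ) : Comp (pertCorr u e) p = Comp (pertCorr u e') p := by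
  funext zA zB xA xB
  simp only [Comp, pertCorr]
  have key : ∀ c : ℝ,
      (∑ yA : Y, ∑ yB : Y,
        ((if yA = yB then (if zA = zB then (1:ℝ)/2 else 0) else 1/4) +
         ((if zA = 0 then (1:ℝ) else -1) * (if zB = 0 then (1:ℝ) else -1)) * c * u yA yB)
          * p yA yB xA xB)
      = ∑ yA : Y, ∑ yB : Y,
          (if yA = yB then (if zA = zB then (1:ℝ)/2 else 0) else 1/4) * p yA yB xA xB := by
    intro c
    simp only [add_mul, Finset.sum_add_distrib]
    have h2 : (∑ yA : Y, ∑ yB : Y,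
        ((if zA = 0 then (1:ℝ) else -1) * (if zB = 0 then (1:ℝ) else -1)) * c
          * u yA yB * p yA yB xA xB) = 0 := by
      simp only [mul_assoc, ← Finset.mul_sum]
      rw [hnull xA xB, mul_zero, mul_zero, mul_zero]
    rw [h2, add_zero]
  rw [key e, key e']

theorem detCorr_props (Y : Type*) [Fintype Y] (z₀ : Fin 2) :
    IsCorrelation (fun zA zB (_ _ : Y) =>
      (if zA = z₀ then (1:ℝ) else 0) * (if zB = z₀ then 1 else 0)) ∧
    IsSynchronous (fun zA zB (_ _ : Y) =>
      (if zA = z₀ then (1:ℝ) else 0) * (if zB = z₀ then 1 else 0)) ∧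
    IsNonsignaling (fun zA zB (_ _ : Y) =>
      (if zA = z₀ then (1:ℝ) else 0) * (if zB = z₀ then 1 else 0)) := by
  refine ⟨⟨fun zA zB _ _ => mul_nonneg (by split <;> norm_num) (by split <;> norm_num),
      fun _ _ => ?_⟩, fun y zA zB hz => ?_,
      fun _ _ _ _ => rfl, fun _ _ _ _ => rfl⟩
  · fin_cases z₀ <;> norm_num [Fin.sum_univ_two]
  · fin_cases zA <;> fin_cases zB <;> fin_cases z₀ <;> simp_all

theorem no_epi_of_null {X Y : Type*} [Fintype X] [Fintype Y] [DecidableEq Y]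
    {p : Y → Y → X → X → ℝ}
    (u : Y → Y → ℝ) (hdiag : ∀ y, u y y = 0)
    (hnull : ∀ xA xB, (∑ yA : Y, ∑ yB : Y, u yA yB * p yA yB xA xB) = 0)
    (a b : Y) (hab : u a b ≠ 0)
    (hEpi : ∀ (Z : Type) [Fintype Z] (q₁ q₂ : Z → Z → Y → Y → ℝ),
      IsCorrelation q₁ → IsSynchronous q₁ → IsNonsignaling q₁ →
      IsCorrelation q₂ → IsSynchronous q₂ → IsNonsignaling q₂ →
      Comp q₁ p = Comp q₂ p → q₁ = q₂) : False := by
  set S := ∑ yA : Y, ∑ yB : Y, |u yA yB| with hS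
  have hS0 : 0 ≤ S := Finset.sum_nonneg fun _ _ => Finset.sum_nonneg fun _ _ => abs_nonneg _
  set c := 1 / (4 * (S + 1)) with hc
  have hc0 : 0 < c := by positivity
  have hbound : ∀ yA yB, |c * u yA yB| ≤ 1/4 := by
    intro yA yB
    have h1 : |u yA yB| ≤ S := by
      calc |u yA yB| ≤ ∑ yB' : Y, |u yA yB'| :=
            Finset.single_le_sum (f := fun yB' => |u yA yB'|)
              (fun i _ => abs_nonneg _) (Finset.mem_univ yB)
        _ ≤ S := Finset.single_le_sum (f := fun yA' => ∑ yB' : Y, |u yA' yB'|)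
            (fun i _ => Finset.sum_nonneg fun _ _ => abs_nonneg _) (Finset.mem_univ yA)
    rw [abs_mul, abs_of_pos hc0]
    have h2 : c * (S + 1) = 1/4 := by
      rw [hc]; field_simp
    nlinarith
  have hbound' : ∀ yA yB, |(-c) * u yA yB| ≤ 1/4 := by
    intro yA yB; rw [neg_mul, abs_neg]; exact hbound yA yB
  have heq := hEpi (Fin 2) (pertCorr u c) (pertCorr u (-c))
    (pertCorr_isCorrelation hdiag hbound) (pertCorr_isSynchronous hdiag c)
    (pertCorr_isNonsignaling u c)
    (pertCorr_isCorrelation hdiag hbound') (pertCorr_isSynchronous hdiag (-c))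
    (pertCorr_isNonsignaling u (-c))
    (pertCorr_comp_eq hnull c (-c))
  have hpt := congrFun (congrFun (congrFun (congrFun heq 0) 0) a) b
  simp only [pertCorr] at hpt
  norm_num at hpt
  have h4 : c * u a b = 0 := by linarith
  exact hab ((mul_eq_zero.mp h4).resolve_left (ne_of_gt hc0))

/-- In the category of synchronous nonsignaling correlations, epimorphisms are precisely
the correlations whose stochastic matrix has zero left nullspace. -/
theorem nonsignaling_epi_iff_zero_left_nullspace {X Y : Type*} [Fintype X] [Fintype Y]
    (p : Y → Y → X → X → ℝ)
    (hp : IsCorrelation p) (hps : IsSynchronous p) (hpn : IsNonsignaling p) :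
    (∀ (Z : Type) [Fintype Z] (q₁ q₂ : Z → Z → Y → Y → ℝ),
      IsCorrelation q₁ → IsSynchronous q₁ → IsNonsignaling q₁ →
      IsCorrelation q₂ → IsSynchronous q₂ → IsNonsignaling q₂ →
      Comp q₁ p = Comp q₂ p → q₁ = q₂) ↔
    (∀ w : Y → Y → ℝ,
      (∀ xA xB, (∑ yA : Y, ∑ yB : Y, w yA yB * p yA yB xA xB) = 0) → w = 0) := by
  classical
  constructor
  · -- epi → zero left nullspace
    intro hEpi w h0
    by_contra hw
    have hW : ∃ a b, w a b ≠ 0 := by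
      by_contra h
      push_neg at h
      exact hw (funext fun a => funext fun b => h a b)
    obtain ⟨a, b, hab⟩ := hW
    have hdiagnull : ∀ x : X, (∑ y : Y, w y y * p y y x x) = 0 := by
      intro x
      have h := h0 x x
      rw [Finset.sum_congr rfl (fun yA _ => Finset.sum_eq_single yA
        (fun yB _ hne => by rw [hps x yA yB (Ne.symm hne), mul_zero])
        (fun h' => absurd (Finset.mem_univ yA) h'))] at h
      exact h
    by_cases hu : ∀ yA yB, w yA yB - w yA yA = 0
    · by_cases hu' : ∀ yA yB : Y, w yA yA - w yB yB = 0
      · -- w is constant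
        rcases isEmpty_or_nonempty X with hX | hX
        · obtain ⟨hcor0, hsyn0, hns0⟩ := detCorr_props Y 0
          obtain ⟨hcor1, hsyn1, hns1⟩ := detCorr_props Y 1
          have hdet := hEpi (Fin 2) _ _ hcor0 hsyn0 hns0 hcor1 hsyn1 hns1
            (by funext zA zB xA xB; exact hX.elim xA)
          have h00 := congrFun (congrFun (congrFun (congrFun hdet 0) 0) a) b
          norm_num at h00
        · obtain ⟨x⟩ := hX
          have hconst : ∀ yA yB, w yA yB = w a b := by
            intro yA yB
            have e1 := hu yA yB
            have e2 := hu a b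
            have e3 := hu' yA a
            linarith
          have h := h0 x x
          rw [Finset.sum_congr rfl (fun yA _ => Finset.sum_congr rfl fun yB _ =>
            by rw [hconst yA yB])] at h
          simp only [← Finset.mul_sum] at h
          rw [hp.2 x x, mul_one] at h
          exact hab h
      · -- use u = d yA - d yB
        push_neg at hu'
        obtain ⟨a', b', hab'⟩ := hu'
        have hnull : ∀ xA xB,
            (∑ yA : Y, ∑ yB : Y, (w yA yA - w yB yB) * p yA yB xA xB) = 0 := by
          intro xA xB
          have h1 := colconst_null hps hpn (fun y => w y y) hdiagnull xA xB
          have h2 := rowconst_null hps hpn (fun y => w y y) hdiagnull xA xB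
          simp only [sub_mul, Finset.sum_sub_distrib]
          rw [h1, h2, sub_self]
        exact no_epi_of_null (p := p) (fun yA yB => w yA yA - w yB yB)
          (fun y => sub_self _) hnull a' b' hab' hEpi
    · -- use u = w - d yA
      push_neg at hu
      obtain ⟨a', b', hab'⟩ := hu
      have hnull : ∀ xA xB,
          (∑ yA : Y, ∑ yB : Y, (w yA yB - w yA yA) * p yA yB xA xB) = 0 := by
        intro xA xB
        have h1 := colconst_null hps hpn (fun y => w y y) hdiagnull xA xB
        have h2 := h0 xA xB
        simp only [sub_mul, Finset.sum_sub_distrib]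
        rw [h1, h2, sub_self]
      exact no_epi_of_null (p := p) (fun yA yB => w yA yB - w yA yA)
        (fun y => sub_self _) hnull a' b' hab' hEpi
  · -- zero left nullspace → epi
    intro hN Z _ q₁ q₂ hc1 hs1 hn1 hc2 hs2 hn2 hcomp
    funext zA zB yA yB
    have hw := hN (fun yA yB => q₁ zA zB yA yB - q₂ zA zB yA yB) (fun xA xB => by
      have h := congrFun (congrFun (congrFun (congrFun hcomp zA) zB) xA) xB
      simp only [Comp] at h
      simp only [sub_mul, Finset.sum_sub_distrib]
      rw [h, sub_self])
    have := congrFun (congrFun hw yA) yB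
    simp only [Pi.zero_apply] at this
    linarith
end

section
/- Let p be a symmetric synchronous nonsignaling correlation from a finite set X to a finite set Y which is an epimorphism with respect to synchronous classical correlations (i.e., for every finite set Z and every pair of synchronous classical correlations q_1, q_2 from Y to Z, q_1 ∘ p = q_2 ∘ p implies q_1 = q_2). If v : Y × Y → ℝ satisfies v(y_A, y_B) = −v(y_B, y_A) for all y_A, y_B and ∑_{y_A, y_B ∈ Y} v(y_A, y_B) p(y_A, y_B | x_A, x_B) = 0 for all x_A, x_B ∈ X, then v = 0. -/
open Finset Matrix Kronecker
open scoped ComplexOrder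

/-!
Both parties of a shared-randomness strategy apply one common function `Y → Z`, so any mixture
of such strategies is a synchronous classical correlation. Fix `C : Z → Z → ℝ` with zero row
and column sums and mix the functions sending `a ↦ s`, `b ↦ t` and everything else to `z₀`
with signed weights `v a b * C s t`: after summing over `s, t`, every pairing of outputs except
`(s, t)` and `(t, s)` leaves an index of `C` summed out, so the result is `(C - Cᵀ) ⊗ v`.
These weights sum to zero, so for small `ε > 0` a strictly positive mixture `q₁` and its
perturbation `q₂ = q₁ + ε (C - Cᵀ) ⊗ v` are both synchronous classical correlations.
As `v` annihilates `p`, they agree after composing with `p`; the epimorphism property gives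
`q₁ = q₂`, and choosing `C` with `C - Cᵀ ≠ 0` forces `v = 0`.
-/

theorem exists_mem_stdSimplex_add_smul_mem {Ω : Type*} [Fintype Ω] [Nonempty Ω] (c : Ω → ℝ)
    (hc : ∑ ω, c ω = 0) :
    ∃ μ ∈ stdSimplex ℝ Ω, ∃ ε : ℝ, 0 < ε ∧ μ + ε • c ∈ stdSimplex ℝ Ω := by
  set M := ∑ ω, (|c ω| + 1)
  have hM : 0 < M := Finset.sum_pos (fun ω _ => by positivity) Finset.univ_nonempty
  have hμ : ∑ ω, (|c ω| + 1) / M = 1 := by rw [← Finset.sum_div, div_self hM.ne']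
  refine ⟨fun ω => (|c ω| + 1) / M, ⟨fun ω => by positivity, hμ⟩, M⁻¹, inv_pos.2 hM,
    fun ω => ?_, ?_⟩
  · have := neg_abs_le (c ω)
    simp only [Pi.add_apply, Pi.smul_apply, smul_eq_mul]
    rw [div_eq_inv_mul, ← mul_add]
    exact mul_nonneg (inv_nonneg.2 hM.le) (by linarith)
  · simp only [Pi.add_apply, Pi.smul_apply, smul_eq_mul, Finset.sum_add_distrib,
      ← Finset.mul_sum, hc, hμ, mul_zero, add_zero]

theorem sum_sum_idCorr {X : Type*} [Fintype X] [DecidableEq X] (xA xB : X) :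
    ∑ xA', ∑ xB', IdCorr X xA' xB' xA xB = 1 := by
  simp [IdCorr]

noncomputable def deterministicMixture {Ω Y Z : Type*} [Fintype Ω] [DecidableEq Z]
    (μ : Ω → ℝ) (g : Ω → Y → Z) : Z → Z → Y → Y → ℝ :=
  fun zA zB yA yB => ∑ ω, μ ω * IdCorr Z zA zB (g ω yA) (g ω yB)

section deterministicMixture
variable {Ω Y Z : Type*} [Fintype Ω] [DecidableEq Z] {μ : Ω → ℝ}

theorem isCorrelation_deterministicMixture [Fintype Y] [Fintype Z] (hμ : μ ∈ stdSimplex ℝ Ω)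
    (g : Ω → Y → Z) : IsCorrelation (deterministicMixture μ g) := by
  refine ⟨fun zA zB yA yB => Finset.sum_nonneg fun ω _ => ?_, fun yA yB => ?_⟩
  · exact mul_nonneg (hμ.1 ω) (by unfold IdCorr; positivity)
  · simp only [deterministicMixture]
    conv_lhs => enter [2, zA]; rw [Finset.sum_comm]
    rw [Finset.sum_comm]
    simp only [← Finset.mul_sum, sum_sum_idCorr, mul_one, hμ.2]

theorem isSynchronous_deterministicMixture (μ : Ω → ℝ) (g : Ω → Y → Z) :
    IsSynchronous (deterministicMixture μ g) := by
  intro y zA zB hz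
  refine Finset.sum_eq_zero fun ω _ => ?_
  simp only [IdCorr]
  split_ifs with hA hB
  · exact absurd (hA.trans hB.symm) hz
  all_goals simp

theorem isClassical_deterministicMixture [Fintype Y] [Fintype Z] (hμ : μ ∈ stdSimplex ℝ Ω)
    (g : Ω → Y → Z) : IsClassical (deterministicMixture μ g) := by
  let e := Fintype.equivFin Ω
  let Pr : Z → Y → Fin (Fintype.card Ω) → ℝ := fun z y i =>
    if z = g (e.symm i) y then 1 else 0
  have hPr : ∀ y i, ∑ z, Pr z y i = 1 := fun y i => by simp [Pr]
  refine ⟨Fintype.card Ω, μ ∘ e.symm, Pr, Pr, fun i => hμ.1 _, ?_, fun z y i => ?_, hPr,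
    fun z y i => ?_, hPr, fun zA zB yA yB => ?_⟩
  · rw [← hμ.2]; exact e.symm.sum_comp μ
  · dsimp only [Pr]; positivity
  · dsimp only [Pr]; positivity
  · rw [deterministicMixture, ← e.symm.sum_comp]
    simp [IdCorr, Pr]

end deterministicMixture

def pairRelabel {Y Z : Type*} [DecidableEq Y] (a b : Y) (s t z₀ : Z) (y : Y) : Z :=
  if y = a then s else if y = b then t else z₀

section pairRelabel
variable {Y Z : Type*} [DecidableEq Y] [Fintype Z] [DecidableEq Z] {C : Z → Z → ℝ}
  {v : Y → Y → ℝ}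

theorem sum_mul_idCorr_pairRelabel (hrow : ∀ s, ∑ t, C s t = 0) (hcol : ∀ t, ∑ s, C s t = 0)
    {a b : Y} (hab : a ≠ b) (z₀ zA zB : Z) (yA yB : Y) :
    ∑ s, ∑ t, C s t * IdCorr Z zA zB (pairRelabel a b s t z₀ yA) (pairRelabel a b s t z₀ yB)
      = IdCorr Y yA yB a b * C zA zB + IdCorr Y yA yB b a * C zB zA := by
  by_cases hAa : yA = a <;> by_cases hAb : yA = b <;> by_cases hBa : yB = a <;>
    by_cases hBb : yB = b <;> simp_all [pairRelabel, IdCorr]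

theorem sum_mul_idCorr_pairRelabel_eq [Fintype Y] (hrow : ∀ s, ∑ t, C s t = 0)
    (hcol : ∀ t, ∑ s, C s t = 0) (hvskew : ∀ a b, v a b = -v b a) (z₀ zA zB : Z)
    (yA yB : Y) :
    ∑ a, ∑ b, ∑ s, ∑ t, v a b * C s t *
        IdCorr Z zA zB (pairRelabel a b s t z₀ yA) (pairRelabel a b s t z₀ yB)
      = (C zA zB - C zB zA) * v yA yB := by
  have hdiag : ∀ a, v a a = 0 := fun a => by linarith [hvskew a a]
  have hinner : ∀ a b, ∑ s, ∑ t, v a b * C s t *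
        IdCorr Z zA zB (pairRelabel a b s t z₀ yA) (pairRelabel a b s t z₀ yB)
      = v a b * (IdCorr Y yA yB a b * C zA zB + IdCorr Y yA yB b a * C zB zA) := by
    intro a b
    rcases eq_or_ne a b with rfl | hab
    · simp [hdiag]
    · simp only [mul_assoc, ← Finset.mul_sum]
      rw [sum_mul_idCorr_pairRelabel hrow hcol hab]
  simp only [hinner]
  simp only [IdCorr, mul_ite, mul_one, mul_zero, ite_mul, one_mul, zero_mul, mul_add,
    Finset.sum_add_distrib, Finset.sum_ite_eq, Finset.mem_univ, if_true, Finset.sum_ite_irrel,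
    Finset.sum_const_zero, hvskew yB yA, neg_mul]
  ring

theorem exists_synchronous_classical_eq_add_mul [Fintype Y] [Nonempty Y]
    (hrow : ∀ s, ∑ t, C s t = 0) (hcol : ∀ t, ∑ s, C s t = 0)
    (hvskew : ∀ a b, v a b = -v b a) (z₀ : Z) :
    ∃ q₁ q₂ : Z → Z → Y → Y → ℝ, ∃ ε : ℝ, 0 < ε ∧
      (IsCorrelation q₁ ∧ IsSynchronous q₁ ∧ IsClassical q₁) ∧
      (IsCorrelation q₂ ∧ IsSynchronous q₂ ∧ IsClassical q₂) ∧
      ∀ zA zB yA yB,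
        q₂ zA zB yA yB = q₁ zA zB yA yB + ε * (C zA zB - C zB zA) * v yA yB := by
  let c : Y × Y × Z × Z → ℝ := fun ω => v ω.1 ω.2.1 * C ω.2.2.1 ω.2.2.2
  let g : Y × Y × Z × Z → Y → Z := fun ω => pairRelabel ω.1 ω.2.1 ω.2.2.1 ω.2.2.2 z₀
  have hc : ∑ ω, c ω = 0 := by
    simp [c, Fintype.sum_prod_type, ← Finset.mul_sum, hrow]
  have : Nonempty Z := ⟨z₀⟩
  obtain ⟨μ, hμ, ε, hε, hμε⟩ := exists_mem_stdSimplex_add_smul_mem c hc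
  refine ⟨deterministicMixture μ g, deterministicMixture (μ + ε • c) g, ε, hε,
    ⟨isCorrelation_deterministicMixture hμ g, isSynchronous_deterministicMixture μ g,
      isClassical_deterministicMixture hμ g⟩,
    ⟨isCorrelation_deterministicMixture hμε g, isSynchronous_deterministicMixture _ g,
      isClassical_deterministicMixture hμε g⟩, fun zA zB yA yB => ?_⟩
  rw [mul_assoc ε, ← sum_mul_idCorr_pairRelabel_eq hrow hcol hvskew z₀]
  simp only [deterministicMixture, Pi.add_apply, Pi.smul_apply, smul_eq_mul, add_mul,
    Finset.sum_add_distrib, Finset.mul_sum, Fintype.sum_prod_type, c, g, mul_assoc]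

end pairRelabel

theorem comp_eq_comp_of_eq_add_mul {X Y Z : Type*} [Fintype Y] {p : Y → Y → X → X → ℝ}
    {v : Y → Y → ℝ} (hv : ∀ xA xB, ∑ yA, ∑ yB, v yA yB * p yA yB xA xB = 0)
    {q₁ q₂ : Z → Z → Y → Y → ℝ} (w : Z → Z → ℝ)
    (hq : ∀ zA zB yA yB, q₂ zA zB yA yB = q₁ zA zB yA yB + w zA zB * v yA yB) :
    Comp q₂ p = Comp q₁ p := by
  funext zA zB xA xB
  simp only [Comp, hq, add_mul, Finset.sum_add_distrib, mul_assoc, ← Finset.mul_sum, hv,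
    mul_zero, add_zero]

noncomputable def shiftSubId (s t : Fin 3) : ℝ :=
  (if t = s + 1 then 1 else 0) - (if t = s then 1 else 0)

theorem sum_shiftSubId_right (s : Fin 3) : ∑ t, shiftSubId s t = 0 := by
  simp [shiftSubId, Finset.sum_sub_distrib]

theorem sum_shiftSubId_left (t : Fin 3) : ∑ s, shiftSubId s t = 0 := by
  simp [shiftSubId, Finset.sum_sub_distrib, ← sub_eq_iff_eq_add]

theorem shiftSubId_zero_one_sub : shiftSubId 0 1 - shiftSubId 1 0 = 1 := by
  simp [shiftSubId]

theorem antisymmetric_left_nullspace_vanishes_general {X Y : Type*} [Fintype Y]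
    (p : Y → Y → X → X → ℝ)
    (hepi : ∀ (Z : Type) [Fintype Z] (q₁ q₂ : Z → Z → Y → Y → ℝ),
      IsCorrelation q₁ → IsSynchronous q₁ → IsClassical q₁ →
      IsCorrelation q₂ → IsSynchronous q₂ → IsClassical q₂ →
      Comp q₁ p = Comp q₂ p → q₁ = q₂)
    (v : Y → Y → ℝ)
    (hvskew : ∀ yA yB, v yA yB = -v yB yA)
    (hv : ∀ xA xB, (∑ yA : Y, ∑ yB : Y, v yA yB * p yA yB xA xB) = 0) :
    v = 0 := by
  classical
  funext yA yB
  have : Nonempty Y := ⟨yA⟩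
  obtain ⟨q₁, q₂, ε, hε, ⟨hq₁, hq₁s, hq₁c⟩, ⟨hq₂, hq₂s, hq₂c⟩, hq⟩ :=
    exists_synchronous_classical_eq_add_mul sum_shiftSubId_right sum_shiftSubId_left hvskew 0
  have hq₂₁ : q₂ = q₁ := hepi (Fin 3) q₂ q₁ hq₂ hq₂s hq₂c hq₁ hq₁s hq₁c
    (comp_eq_comp_of_eq_add_mul hv _ hq)
  have h01 := hq 0 1 yA yB
  rw [hq₂₁, shiftSubId_zero_one_sub, mul_one, left_eq_add] at h01
  exact (mul_eq_zero.1 h01).resolve_left hε.ne'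

/-- For a symmetric synchronous nonsignaling correlation which is epic with respect to
synchronous classical correlations, any antisymmetric left nullspace vector vanishes. -/
theorem antisymmetric_left_nullspace_vanishes {X Y : Type*} [Fintype X] [Fintype Y]
    (p : Y → Y → X → X → ℝ)
    (hp : IsCorrelation p) (hps : IsSynchronous p)
    (hpn : IsNonsignaling p) (hsym : IsSymmetric p)
    (hepi : ∀ (Z : Type) [Fintype Z] (q₁ q₂ : Z → Z → Y → Y → ℝ),
      IsCorrelation q₁ → IsSynchronous q₁ → IsClassical q₁ →
      IsCorrelation q₂ → IsSynchronous q₂ → IsClassical q₂ →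
      Comp q₁ p = Comp q₂ p → q₁ = q₂)
    (v : Y → Y → ℝ)
    (hvskew : ∀ yA yB, v yA yB = -v yB yA)
    (hv : ∀ xA xB, (∑ yA : Y, ∑ yB : Y, v yA yB * p yA yB xA xB) = 0) :
    v = 0 :=
  antisymmetric_left_nullspace_vanishes_general p hepi v hvskew hv
end
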